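/- arXiv:2105.10928 — 3 statements merged into one kernel-verified Lean document; each statement's English description precedes it below -/
import Mathlib

section
/- Suppose the constants g^{kij} satisfy the standard null condition. Then for any twice continuously differentiable functions f, h of (t,x) ∈ (0,∞) × (ℝ² \ {0}) one has the pointwise identity g^{kij} ∂_k f ∂_{ij} h = g^{kij} ( T_k f ∂_{ij} h − ω_k ∂_t f T_i ∂_j h + ω_k ω_i ∂_t f T_j ∂_t h ), where the indices k, i, j are summed over {0,1,2}. -/
open MeasureTheory Real

noncomputable section

/-- Spacetime ℝ_t × ℝ²_x; coordinate 0 is time, coordinates 1, 2 are space. -/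
abbrev Spt := Fin 3 → ℝ
/-- Space ℝ². -/
abbrev Sp := Fin 2 → ℝ

/-- Partial derivative ∂_i on spacetime (∂_0 = ∂_t). -/
def pd (i : Fin 3) (u : Spt → ℝ) : Spt → ℝ :=
  fun y => fderiv ℝ u y (Pi.single i 1)

/-- Spatial partial derivative ∂_i on ℝ² (index 0 ↔ x₁, index 1 ↔ x₂). -/
def spd (i : Fin 2) (f : Sp → ℝ) : Sp → ℝ :=
  fun x => fderiv ℝ f x (Pi.single i 1)

/-- The wave operator □ = ∂_tt − Δ. -/
def Box (u : Spt → ℝ) : Spt → ℝ :=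
  fun y => pd 0 (pd 0 u) y - pd 1 (pd 1 u) y - pd 2 (pd 2 u) y

/-- r = |x|, the spatial Euclidean norm of a spacetime point. -/
def rad (y : Spt) : ℝ := Real.sqrt ((y 1) ^ 2 + (y 2) ^ 2)

/-- The Euclidean norm on ℝ². -/
def nrm2 (x : Sp) : ℝ := Real.sqrt ((x 0) ^ 2 + (x 1) ^ 2)

/-- ω₀ = −1, ω_i = x_i / |x| for i = 1, 2. -/
def om (i : Fin 3) (y : Spt) : ℝ := if i = 0 then -1 else y i / rad y

/-- The good derivatives T_i = ω_i ∂_t + ∂_i (note T_0 = 0). -/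
def Td (i : Fin 3) (u : Spt → ℝ) : Spt → ℝ :=
  fun y => om i y * pd 0 u y + pd i u y

/-- The vector fields Γ = (∂_t, ∂_1, ∂_2, ∂_θ, L₀) (no Lorentz boosts). -/
def Gam : Fin 5 → (Spt → ℝ) → Spt → ℝ :=
  ![pd 0, pd 1, pd 2,
    fun u y => y 1 * pd 2 u y - y 2 * pd 1 u y,
    fun u y => y 0 * pd 0 u y + y 1 * pd 1 u y + y 2 * pd 2 u y]

/-- Γ^α = Γ₁^{α₁} ∘ Γ₂^{α₂} ∘ Γ₃^{α₃} ∘ Γ₄^{α₄} ∘ Γ₅^{α₅}. -/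
def GamPow (α : Fin 5 → ℕ) (u : Spt → ℝ) : Spt → ℝ :=
  (Gam 0)^[α 0] <| (Gam 1)^[α 1] <| (Gam 2)^[α 2] <| (Gam 3)^[α 3] <| (Gam 4)^[α 4] u

/-- The multi-indices α with |α| ≤ k. -/
def midx (k : ℕ) : Finset (Fin 5 → ℕ) :=
  (Fintype.piFinset fun _ => Finset.range (k + 1)).filter fun α => (∑ i, α i) ≤ k

/-- The Japanese bracket ⟨s⟩ = (1 + s²)^{1/2}. -/
def jb (s : ℝ) : ℝ := Real.sqrt (1 + s ^ 2)

/-- The spacetime point (t, x). -/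
def st (t : ℝ) (x : Sp) : Spt := ![t, x 0, x 1]

/-- The null vector (−1, cos θ, sin θ). -/
def nullVec (θ : ℝ) : Fin 3 → ℝ := ![(-1 : ℝ), Real.cos θ, Real.sin θ]

/-- The standard null condition: g^{kij} ω_k ω_i ω_j = 0 for all null ω. -/
def NullCond (g : Fin 3 → Fin 3 → Fin 3 → ℝ) : Prop :=
  ∀ θ : ℝ, ∑ k, ∑ i, ∑ j, g k i j * nullVec θ k * nullVec θ i * nullVec θ j = 0

/-- The quadratic nonlinearity g^{kij} ∂_k u ∂_{ij} u. -/
def Quad (g : Fin 3 → Fin 3 → Fin 3 → ℝ) (u : Spt → ℝ) : Spt → ℝ :=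
  fun y => ∑ k, ∑ i, ∑ j, g k i j * pd k u y * pd i (pd j u) y

/-- The energy E_J(u(t,·)) = Σ_{|α|≤J} ‖(∂Γ^α u)(t,·)‖²_{L²(ℝ²)}. -/
def energy (J : ℕ) (u : Spt → ℝ) (t : ℝ) : ℝ :=
  ∑ α ∈ midx J, ∑ i : Fin 3, ∫ x : Sp, (pd i (GamPow α u) (st t x)) ^ 2

/-- The L² norm on ℝ². -/
def L2 (f : Sp → ℝ) : ℝ := Real.sqrt (∫ x : Sp, (f x) ^ 2)

/-- The domain (0,∞) × (ℝ² \ {0}) in spacetime. -/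
def Udom : Set Spt := {y | 0 < y 0 ∧ rad y ≠ 0}

lemma Udom_open' : IsOpen Udom := by
  have h1 : Continuous fun y : Spt => y 0 := continuous_apply 0
  have h2 : Continuous rad := by unfold rad; fun_prop
  exact (isOpen_lt continuous_const h1).inter (isOpen_ne_fun h2 continuous_const)

lemma pd_pd' (u : Spt → ℝ) (y : Spt) (hu : DifferentiableAt ℝ (fderiv ℝ u) y) (i j : Fin 3) :
    pd i (pd j u) y = fderiv ℝ (fderiv ℝ u) y (Pi.single i 1) (Pi.single j 1) := by
  unfold pd
  rw [fderiv_clm_apply hu (differentiableAt_const _)]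
  simp

lemma pd_symm' (u : Spt → ℝ) (y : Spt) (hy : y ∈ Udom) (hu : ContDiffOn ℝ 2 u Udom)
    (i j : Fin 3) : pd i (pd j u) y = pd j (pd i u) y := by
  have hat : ContDiffAt ℝ 2 u y := hu.contDiffAt (Udom_open'.mem_nhds hy)
  have hsymm := hat.isSymmSndFDerivAt (by norm_num)
  have hd : DifferentiableAt ℝ (fderiv ℝ u) y :=
    (hat.fderiv_right (m := 1) (by norm_num)).differentiableAt one_ne_zero
  rw [pd_pd' u y hd, pd_pd' u y hd, hsymm]

lemma nullsum' (g : Fin 3 → Fin 3 → Fin 3 → ℝ) (hnull : NullCond g) (a b : ℝ)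
    (hab : a ^ 2 + b ^ 2 = 1) :
    ∑ k, ∑ i, ∑ j, g k i j * ![(-1 : ℝ), a, b] k * ![(-1 : ℝ), a, b] i * ![(-1 : ℝ), a, b] j
      = 0 := by
  have ha1 : -1 ≤ a := by nlinarith [sq_nonneg b]
  have ha2 : a ≤ 1 := by nlinarith [sq_nonneg b]
  obtain ⟨θ, hc, hs⟩ : ∃ θ, Real.cos θ = a ∧ Real.sin θ = b := by
    refine ⟨if 0 ≤ b then Real.arccos a else -Real.arccos a, ?_, ?_⟩
    · split <;> simp [Real.cos_arccos ha1 ha2]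
    · have h1 : Real.sin (Real.arccos a) = |b| := by
        rw [Real.sin_arccos]
        have : 1 - a ^ 2 = b ^ 2 := by linarith
        rw [this, Real.sqrt_sq_eq_abs]
      by_cases hb : 0 ≤ b
      · rw [if_pos hb, h1, abs_of_nonneg hb]
      · rw [if_neg hb, Real.sin_neg, h1, abs_of_neg (not_le.1 hb)]; ring
  have hv : nullVec θ = ![(-1 : ℝ), a, b] := by unfold nullVec; rw [hc, hs]
  have := hnull θ
  rwa [hv] at this

/-- Null form decomposition: under the null condition,
g^{kij} ∂_k f ∂_{ij} h = g^{kij}(T_k f ∂_{ij} h − ω_k ∂_t f T_i ∂_j h + ω_k ω_i ∂_t f T_j ∂_t h). -/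
theorem statement4
    (g : Fin 3 → Fin 3 → Fin 3 → ℝ)
    (hsym : ∀ k i j, g k i j = g k j i)
    (hnull : NullCond g)
    (f h : Spt → ℝ)
    (hf : ContDiffOn ℝ 2 f Udom) (hh : ContDiffOn ℝ 2 h Udom) :
    ∀ y ∈ Udom,
      (∑ k, ∑ i, ∑ j, g k i j * pd k f y * pd i (pd j h) y) =
      ∑ k, ∑ i, ∑ j, g k i j *
        (Td k f y * pd i (pd j h) y
          - om k y * pd 0 f y * Td i (pd j h) y
          + om k y * om i y * pd 0 f y * Td j (pd 0 h) y) := by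
  intro y hy
  have hr : rad y ≠ 0 := hy.2
  have hab : (y 1 / rad y) ^ 2 + (y 2 / rad y) ^ 2 = 1 := by
    have hsq : rad y ^ 2 = (y 1) ^ 2 + (y 2) ^ 2 := by
      unfold rad; rw [Real.sq_sqrt]; positivity
    field_simp
    linarith [hsq]
  have nc := nullsum' g hnull (y 1 / rad y) (y 2 / rad y) hab
  simp only [Fin.sum_univ_three, Matrix.cons_val_zero, Matrix.cons_val_one, Matrix.head_cons,
    Matrix.cons_val_two, Matrix.tail_cons] at nc
  have s1 : pd 0 (pd 1 h) y = pd 1 (pd 0 h) y := pd_symm' h y hy hh 0 1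
  have s2 : pd 0 (pd 2 h) y = pd 2 (pd 0 h) y := pd_symm' h y hy hh 0 2
  simp only [Fin.sum_univ_three, Td, om, if_pos, if_neg, Fin.isValue, reduceIte,
    show ((1 : Fin 3) = 0) = False by simp, show ((2 : Fin 3) = 0) = False by simp]
  rw [s1, s2]
  linear_combination (- pd 0 f y * pd 0 (pd 0 h) y) * nc
end
end

section
/- Suppose the constants g^{kij} satisfy the standard null condition and u is a smooth solution of □u = g^{kij} ∂_k u ∂_{ij} u. Then for every multi-index α there exist constants g^{kij}_{α₁,α₂} (defined for multi-indices with α₁ + α₂ ≤ α), each family (g^{kij}_{α₁,α₂})_{k,i,j} satisfying the standard null condition, with g^{kij}_{α,0} = g^{kij}_{0,α} = g^{kij}, such that □Γ^α u = Σ_{α₁+α₂ ≤ α} g^{kij}_{α₁,α₂} ∂_k Γ^{α₁} u ∂_{ij} Γ^{α₂} u. -/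
open MeasureTheory Real

noncomputable section

/-- The pairs of multi-indices (α₁, α₂) with α₁ + α₂ ≤ α (componentwise). -/
def pairsLe (α : Fin 5 → ℕ) : Finset ((Fin 5 → ℕ) × (Fin 5 → ℕ)) :=
  (((Fintype.piFinset fun i => Finset.range (α i + 1)) ×ˢ
      (Fintype.piFinset fun i => Finset.range (α i + 1))).filter
    fun p => ∀ i, p.1 i + p.2 i ≤ α i)

lemma smooth_pd {u : Spt → ℝ} (hu : ContDiff ℝ (⊤ : ℕ∞) u) (i : Fin 3) : ContDiff ℝ (⊤ : ℕ∞) (pd i u) := by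
  unfold pd
  exact (hu.fderiv_right (le_refl _)).clm_apply contDiff_const

lemma diff_of_smooth {u : Spt → ℝ} (hu : ContDiff ℝ (⊤ : ℕ∞) u) : Differentiable ℝ u :=
  hu.differentiable (by simp)

lemma pd_eq_snd {u : Spt → ℝ} (hu : ContDiff ℝ (⊤ : ℕ∞) u) (i j : Fin 3) (y : Spt) :
    pd i (pd j u) y = fderiv ℝ (fderiv ℝ u) y (Pi.single i 1) (Pi.single j 1) := by
  have hdf : DifferentiableAt ℝ (fderiv ℝ u) y :=
    ((hu.fderiv_right (m := (⊤ : ℕ∞)) (by simp)).differentiable (by simp)) y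
  unfold pd
  rw [fderiv_clm_apply hdf (differentiableAt_const _)]
  simp

lemma pd_comm {u : Spt → ℝ} (hu : ContDiff ℝ (⊤ : ℕ∞) u) (i j : Fin 3) :
    pd i (pd j u) = pd j (pd i u) := by
  funext y
  rw [pd_eq_snd hu, pd_eq_snd hu]
  exact (hu.contDiffAt.isSymmSndFDerivAt (by rw [minSmoothness_of_isRCLikeNormedField]; exact WithTop.coe_le_coe.mpr le_top)) _ _

lemma pd_add {f g : Spt → ℝ} (hf : ContDiff ℝ (⊤ : ℕ∞) f) (hg : ContDiff ℝ (⊤ : ℕ∞) g) (i : Fin 3) :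
    pd i (fun y => f y + g y) = fun y => pd i f y + pd i g y := by
  funext y
  unfold pd
  rw [fderiv_fun_add (diff_of_smooth hf y) (diff_of_smooth hg y)]
  simp

lemma pd_sub {f g : Spt → ℝ} (hf : ContDiff ℝ (⊤ : ℕ∞) f) (hg : ContDiff ℝ (⊤ : ℕ∞) g) (i : Fin 3) :
    pd i (fun y => f y - g y) = fun y => pd i f y - pd i g y := by
  funext y
  unfold pd
  rw [fderiv_fun_sub (diff_of_smooth hf y) (diff_of_smooth hg y)]
  simp

lemma pd_mul {f g : Spt → ℝ} (hf : ContDiff ℝ (⊤ : ℕ∞) f) (hg : ContDiff ℝ (⊤ : ℕ∞) g) (i : Fin 3) :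
    pd i (fun y => f y * g y) = fun y => pd i f y * g y + f y * pd i g y := by
  funext y
  unfold pd
  rw [fderiv_fun_mul (diff_of_smooth hf y) (diff_of_smooth hg y)]
  simp only [ContinuousLinearMap.add_apply, ContinuousLinearMap.smul_apply, smul_eq_mul]
  ring

lemma pd_const_mul {f : Spt → ℝ} (hf : ContDiff ℝ (⊤ : ℕ∞) f) (c : ℝ) (i : Fin 3) :
    pd i (fun y => c * f y) = fun y => c * pd i f y := by
  funext y
  unfold pd
  rw [fderiv_const_mul (diff_of_smooth hf y)]
  simp

lemma pd_coord (i : Fin 3) (a : Fin 3) :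
    pd i (fun y : Spt => y a) = fun _ => (Pi.single i 1 : Spt) a := by
  funext y
  unfold pd
  have : (fun y : Spt => y a) = fun y : Spt => (ContinuousLinearMap.proj a : Spt →L[ℝ] ℝ) y := rfl
  rw [this, ContinuousLinearMap.fderiv]
  rfl

lemma pd_coord_mul {f : Spt → ℝ} (hf : ContDiff ℝ (⊤ : ℕ∞) f) (i a : Fin 3) :
    pd i (fun y => y a * f y) = fun y => (Pi.single i 1 : Spt) a * f y + y a * pd i f y := by
  have h1 : ContDiff ℝ (⊤ : ℕ∞) (fun y : Spt => y a) := by fun_prop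
  have := pd_mul h1 hf i
  rw [pd_coord] at this
  exact this

lemma smooth_gam {v : Spt → ℝ} (hv : ContDiff ℝ (⊤ : ℕ∞) v) (m : Fin 5) : ContDiff ℝ (⊤ : ℕ∞) (Gam m v) := by
  fin_cases m
  · exact smooth_pd hv 0
  · exact smooth_pd hv 1
  · exact smooth_pd hv 2
  · show ContDiff ℝ (⊤ : ℕ∞) (fun y : Spt => y 1 * pd 2 v y - y 2 * pd 1 v y)
    have h1 := smooth_pd hv 1
    have h2 := smooth_pd hv 2
    fun_prop
  · show ContDiff ℝ (⊤ : ℕ∞) (fun y : Spt => y 0 * pd 0 v y + y 1 * pd 1 v y + y 2 * pd 2 v y)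
    have h0 := smooth_pd hv 0
    have h1 := smooth_pd hv 1
    have h2 := smooth_pd hv 2
    fun_prop

def cm (m : Fin 5) (k k' : Fin 3) : ℝ :=
  if m = 3 then (if k = 1 ∧ k' = 2 then -1 else if k = 2 ∧ k' = 1 then 1 else 0)
  else if m = 4 then (if k = k' then -1 else 0) else 0

lemma gam_pd {v : Spt → ℝ} (hv : ContDiff ℝ (⊤ : ℕ∞) v) (m : Fin 5) (k : Fin 3) :
    Gam m (pd k v) = fun y => pd k (Gam m v) y + ∑ k', cm m k k' * pd k' v y := by
  have hpd : ∀ j, ContDiff ℝ (⊤ : ℕ∞) (pd j v) := smooth_pd hv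
  fin_cases m
  · show pd 0 (pd k v) = fun y => pd k (pd 0 v) y + ∑ k', cm 0 k k' * pd k' v y
    funext y; rw [pd_comm hv]; simp [cm]
  · show pd 1 (pd k v) = fun y => pd k (pd 1 v) y + ∑ k', cm 1 k k' * pd k' v y
    funext y; rw [pd_comm hv]; simp [cm]
  · show pd 2 (pd k v) = fun y => pd k (pd 2 v) y + ∑ k', cm 2 k k' * pd k' v y
    funext y; rw [pd_comm hv]; simp [cm]
  · show (fun y => y 1 * pd 2 (pd k v) y - y 2 * pd 1 (pd k v) y)
      = fun y => pd k (Gam 3 v) y + ∑ k', cm 3 k k' * pd k' v y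
    have e : Gam 3 v = fun y => y 1 * pd 2 v y - y 2 * pd 1 v y := rfl
    have h31 : ContDiff ℝ (⊤ : ℕ∞) (fun y : Spt => y 1 * pd 2 v y) := by
      have := hpd 2; fun_prop
    have h32 : ContDiff ℝ (⊤ : ℕ∞) (fun y : Spt => y 2 * pd 1 v y) := by
      have := hpd 1; fun_prop
    funext y
    rw [e, pd_sub h31 h32, pd_coord_mul (hpd 2) k 1, pd_coord_mul (hpd 1) k 2]
    rw [pd_comm hv 2 k, pd_comm hv 1 k]
    fin_cases k <;>
      simp [cm, Fin.sum_univ_three, Pi.single_apply] <;> ring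
  · show (fun y => y 0 * pd 0 (pd k v) y + y 1 * pd 1 (pd k v) y + y 2 * pd 2 (pd k v) y)
      = fun y => pd k (Gam 4 v) y + ∑ k', cm 4 k k' * pd k' v y
    have e : Gam 4 v = fun y => y 0 * pd 0 v y + y 1 * pd 1 v y + y 2 * pd 2 v y := rfl
    have h0 : ContDiff ℝ (⊤ : ℕ∞) (fun y : Spt => y 0 * pd 0 v y) := by have := hpd 0; fun_prop
    have h1 : ContDiff ℝ (⊤ : ℕ∞) (fun y : Spt => y 1 * pd 1 v y) := by have := hpd 1; fun_prop
    have h01 : ContDiff ℝ (⊤ : ℕ∞) (fun y : Spt => y 0 * pd 0 v y + y 1 * pd 1 v y) := by fun_prop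
    have h2 : ContDiff ℝ (⊤ : ℕ∞) (fun y : Spt => y 2 * pd 2 v y) := by have := hpd 2; fun_prop
    funext y
    rw [e]
    rw [show (fun y : Spt => y 0 * pd 0 v y + y 1 * pd 1 v y + y 2 * pd 2 v y)
        = (fun y : Spt => (y 0 * pd 0 v y + y 1 * pd 1 v y) + y 2 * pd 2 v y) from rfl]
    rw [pd_add h01 h2, pd_add h0 h1, pd_coord_mul (hpd 0) k 0, pd_coord_mul (hpd 1) k 1,
      pd_coord_mul (hpd 2) k 2]
    rw [pd_comm hv 0 k, pd_comm hv 1 k, pd_comm hv 2 k]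
    fin_cases k <;>
      simp [cm, Fin.sum_univ_three, Pi.single_apply] <;> ring

lemma pd_sum {ι : Type*} (s : Finset ι) (f : ι → Spt → ℝ)
    (h : ∀ p ∈ s, ContDiff ℝ (⊤ : ℕ∞) (f p)) (i : Fin 3) :
    pd i (fun y => ∑ p ∈ s, f p y) = fun y => ∑ p ∈ s, pd i (f p) y := by
  funext y
  unfold pd
  rw [fderiv_fun_sum (fun p hp => diff_of_smooth (h p hp) y)]
  simp

lemma gam_sub {f g : Spt → ℝ} (hf : ContDiff ℝ (⊤ : ℕ∞) f) (hg : ContDiff ℝ (⊤ : ℕ∞) g) (m : Fin 5) :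
    Gam m (fun y => f y - g y) = fun y => Gam m f y - Gam m g y := by
  fin_cases m
  · exact pd_sub hf hg 0
  · exact pd_sub hf hg 1
  · exact pd_sub hf hg 2
  · show (fun y => y 1 * pd 2 (fun y => f y - g y) y - y 2 * pd 1 (fun y => f y - g y) y) = _
    funext y; rw [pd_sub hf hg, pd_sub hf hg]
    show _ = (y 1 * pd 2 f y - y 2 * pd 1 f y) - (y 1 * pd 2 g y - y 2 * pd 1 g y)
    ring
  · show (fun y => y 0 * pd 0 (fun y => f y - g y) y + y 1 * pd 1 (fun y => f y - g y) y
        + y 2 * pd 2 (fun y => f y - g y) y) = _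
    funext y; rw [pd_sub hf hg, pd_sub hf hg, pd_sub hf hg]
    show _ = (y 0 * pd 0 f y + y 1 * pd 1 f y + y 2 * pd 2 f y)
        - (y 0 * pd 0 g y + y 1 * pd 1 g y + y 2 * pd 2 g y)
    ring

lemma gam_add {f g : Spt → ℝ} (hf : ContDiff ℝ (⊤ : ℕ∞) f) (hg : ContDiff ℝ (⊤ : ℕ∞) g) (m : Fin 5) :
    Gam m (fun y => f y + g y) = fun y => Gam m f y + Gam m g y := by
  fin_cases m
  · exact pd_add hf hg 0
  · exact pd_add hf hg 1
  · exact pd_add hf hg 2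
  · show (fun y => y 1 * pd 2 (fun y => f y + g y) y - y 2 * pd 1 (fun y => f y + g y) y) = _
    funext y; rw [pd_add hf hg, pd_add hf hg]
    show _ = (y 1 * pd 2 f y - y 2 * pd 1 f y) + (y 1 * pd 2 g y - y 2 * pd 1 g y)
    ring
  · show (fun y => y 0 * pd 0 (fun y => f y + g y) y + y 1 * pd 1 (fun y => f y + g y) y
        + y 2 * pd 2 (fun y => f y + g y) y) = _
    funext y; rw [pd_add hf hg, pd_add hf hg, pd_add hf hg]
    show _ = (y 0 * pd 0 f y + y 1 * pd 1 f y + y 2 * pd 2 f y)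
        + (y 0 * pd 0 g y + y 1 * pd 1 g y + y 2 * pd 2 g y)
    ring

lemma gam_const_mul {f : Spt → ℝ} (hf : ContDiff ℝ (⊤ : ℕ∞) f) (c : ℝ) (m : Fin 5) :
    Gam m (fun y => c * f y) = fun y => c * Gam m f y := by
  fin_cases m
  · exact pd_const_mul hf c 0
  · exact pd_const_mul hf c 1
  · exact pd_const_mul hf c 2
  · show (fun y => y 1 * pd 2 (fun y => c * f y) y - y 2 * pd 1 (fun y => c * f y) y) = _
    funext y; rw [pd_const_mul hf, pd_const_mul hf]
    show _ = c * (y 1 * pd 2 f y - y 2 * pd 1 f y)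
    ring
  · show (fun y => y 0 * pd 0 (fun y => c * f y) y + y 1 * pd 1 (fun y => c * f y) y
        + y 2 * pd 2 (fun y => c * f y) y) = _
    funext y; rw [pd_const_mul hf, pd_const_mul hf, pd_const_mul hf]
    show _ = c * (y 0 * pd 0 f y + y 1 * pd 1 f y + y 2 * pd 2 f y)
    ring

lemma gam_mul {f g : Spt → ℝ} (hf : ContDiff ℝ (⊤ : ℕ∞) f) (hg : ContDiff ℝ (⊤ : ℕ∞) g) (m : Fin 5) :
    Gam m (fun y => f y * g y) = fun y => Gam m f y * g y + f y * Gam m g y := by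
  fin_cases m
  · exact pd_mul hf hg 0
  · exact pd_mul hf hg 1
  · exact pd_mul hf hg 2
  · show (fun y => y 1 * pd 2 (fun y => f y * g y) y - y 2 * pd 1 (fun y => f y * g y) y) = _
    funext y; rw [pd_mul hf hg, pd_mul hf hg]
    show _ = (y 1 * pd 2 f y - y 2 * pd 1 f y) * g y + f y * (y 1 * pd 2 g y - y 2 * pd 1 g y)
    ring
  · show (fun y => y 0 * pd 0 (fun y => f y * g y) y + y 1 * pd 1 (fun y => f y * g y) y
        + y 2 * pd 2 (fun y => f y * g y) y) = _
    funext y; rw [pd_mul hf hg, pd_mul hf hg, pd_mul hf hg]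
    show _ = (y 0 * pd 0 f y + y 1 * pd 1 f y + y 2 * pd 2 f y) * g y
        + f y * (y 0 * pd 0 g y + y 1 * pd 1 g y + y 2 * pd 2 g y)
    ring

lemma gam_sum {ι : Type*} (s : Finset ι) (f : ι → Spt → ℝ)
    (h : ∀ p ∈ s, ContDiff ℝ (⊤ : ℕ∞) (f p)) (m : Fin 5) :
    Gam m (fun y => ∑ p ∈ s, f p y) = fun y => ∑ p ∈ s, Gam m (f p) y := by
  classical
  induction s using Finset.induction with
  | empty =>
      simp only [Finset.sum_empty]
      fin_cases m
      · funext y; show pd 0 (fun _ => (0:ℝ)) y = 0; unfold pd; simp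
      · funext y; show pd 1 (fun _ => (0:ℝ)) y = 0; unfold pd; simp
      · funext y; show pd 2 (fun _ => (0:ℝ)) y = 0; unfold pd; simp
      · funext y
        show y 1 * pd 2 (fun _ => (0:ℝ)) y - y 2 * pd 1 (fun _ => (0:ℝ)) y = 0
        unfold pd; simp
      · funext y
        show y 0 * pd 0 (fun _ => (0:ℝ)) y + y 1 * pd 1 (fun _ => (0:ℝ)) y
            + y 2 * pd 2 (fun _ => (0:ℝ)) y = 0
        unfold pd; simp
  | insert a s' hnot ih =>
      have hfa : ContDiff ℝ (⊤ : ℕ∞) (f a) := h a (Finset.mem_insert_self a s')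
      have hs : ContDiff ℝ (⊤ : ℕ∞) (fun y => ∑ p ∈ s', f p y) := by
        apply ContDiff.sum (fun p hp => h p (Finset.mem_insert_of_mem hp))
      simp only [Finset.sum_insert hnot]
      rw [gam_add hfa hs m, ih (fun p hp => h p (Finset.mem_insert_of_mem hp))]

lemma pd_gam_eq {v : Spt → ℝ} (hv : ContDiff ℝ (⊤ : ℕ∞) v) (m : Fin 5) (i : Fin 3) :
    pd i (Gam m v) = fun y => Gam m (pd i v) y - ∑ k', cm m i k' * pd k' v y := by
  have := gam_pd hv m i
  funext y
  have h := congrFun this y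
  rw [h]; ring

lemma pdpd_gam {v : Spt → ℝ} (hv : ContDiff ℝ (⊤ : ℕ∞) v) (m : Fin 5) (i : Fin 3) :
    pd i (pd i (Gam m v))
      = fun y => Gam m (pd i (pd i v)) y - 2 * ∑ k', cm m i k' * pd k' (pd i v) y := by
  have hpv : ∀ j, ContDiff ℝ (⊤ : ℕ∞) (pd j v) := smooth_pd hv
  have hgpv : ContDiff ℝ (⊤ : ℕ∞) (Gam m (pd i v)) := smooth_gam (hpv i) m
  have hsum : ContDiff ℝ (⊤ : ℕ∞) (fun y => ∑ k', cm m i k' * pd k' v y) :=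
    ContDiff.sum (fun k' _ => (hpv k').const_smul (cm m i k'))
  rw [pd_gam_eq hv m i, pd_sub hgpv hsum i, pd_gam_eq (hpv i) m i,
    pd_sum Finset.univ (fun k' => fun y => cm m i k' * pd k' v y)
      (fun k' _ => (hpv k').const_smul (cm m i k')) i]
  funext y
  have : ∀ k', pd i (fun y => cm m i k' * pd k' v y) y = cm m i k' * pd i (pd k' v) y := by
    intro k'
    rw [pd_const_mul (hpv k') (cm m i k') i]
  simp only [this]
  have comm : ∀ k', pd i (pd k' v) = pd k' (pd i v) := fun k' => pd_comm hv i k'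
  simp only [comm]
  ring

lemma box_gam {v : Spt → ℝ} (hv : ContDiff ℝ (⊤ : ℕ∞) v) (m : Fin 5) :
    Box (Gam m v) = fun y => Gam m (Box v) y + (if m = 4 then 2 else 0) * Box v y := by
  have hpv : ∀ j, ContDiff ℝ (⊤ : ℕ∞) (pd j v) := smooth_pd hv
  have hppv : ∀ j j', ContDiff ℝ (⊤ : ℕ∞) (pd j (pd j' v)) := fun j j' => smooth_pd (hpv j') j
  have e : Box v = fun y => (pd 0 (pd 0 v) y - pd 1 (pd 1 v) y) - pd 2 (pd 2 v) y := rfl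
  have hsub1 : ContDiff ℝ (⊤ : ℕ∞) (fun y => pd 0 (pd 0 v) y - pd 1 (pd 1 v) y) :=
    (hppv 0 0).sub (hppv 1 1)
  have hgb : Gam m (Box v) = fun y => Gam m (pd 0 (pd 0 v)) y - Gam m (pd 1 (pd 1 v)) y
      - Gam m (pd 2 (pd 2 v)) y := by
    rw [e, gam_sub hsub1 (hppv 2 2) m, gam_sub (hppv 0 0) (hppv 1 1) m]
  funext y
  show pd 0 (pd 0 (Gam m v)) y - pd 1 (pd 1 (Gam m v)) y - pd 2 (pd 2 (Gam m v)) y = _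
  rw [congrFun (pdpd_gam hv m 0) y, congrFun (pdpd_gam hv m 1) y,
    congrFun (pdpd_gam hv m 2) y, congrFun hgb y]
  have hc : ∀ i j, pd i (pd j v) = pd j (pd i v) := pd_comm hv
  have key : - (2 * ∑ k', cm m 0 k' * pd k' (pd 0 v) y)
      + (2 * ∑ k', cm m 1 k' * pd k' (pd 1 v) y)
      + (2 * ∑ k', cm m 2 k' * pd k' (pd 2 v) y)
      = (if m = 4 then 2 else 0) * Box v y := by
    have h21 : pd 2 (pd 1 v) = pd 1 (pd 2 v) := hc 2 1
    fin_cases m <;>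
      simp [cm, Fin.sum_univ_three, Box, h21] <;> ring
  rw [← key]; ring

def Q (g : Fin 3 → Fin 3 → Fin 3 → ℝ) (v w : Spt → ℝ) : Spt → ℝ :=
  fun y => ∑ k, ∑ i, ∑ j, g k i j * pd k v y * pd i (pd j w) y

lemma smooth_Q {v w : Spt → ℝ} (g : Fin 3 → Fin 3 → Fin 3 → ℝ)
    (hv : ContDiff ℝ (⊤ : ℕ∞) v) (hw : ContDiff ℝ (⊤ : ℕ∞) w) : ContDiff ℝ (⊤ : ℕ∞) (Q g v w) := by
  unfold Q
  apply ContDiff.sum; intro k _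
  apply ContDiff.sum; intro i _
  apply ContDiff.sum; intro j _
  have h1 := smooth_pd hv k
  have h2 := smooth_pd (smooth_pd hw j) i
  fun_prop

def Tm (m : Fin 5) (g : Fin 3 → Fin 3 → Fin 3 → ℝ) : Fin 3 → Fin 3 → Fin 3 → ℝ :=
  fun k i j => (∑ k', g k' i j * cm m k' k) + (∑ i', g k i' j * cm m i' i)
    + (∑ j', g k i j' * cm m j' j)

lemma gam_pdpd {w : Spt → ℝ} (hw : ContDiff ℝ (⊤ : ℕ∞) w) (m : Fin 5) (i j : Fin 3) :
    Gam m (pd i (pd j w)) = fun y => pd i (pd j (Gam m w)) y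
      + (∑ i', cm m i i' * pd i' (pd j w) y) + ∑ j', cm m j j' * pd i (pd j' w) y := by
  have hpw : ∀ a, ContDiff ℝ (⊤ : ℕ∞) (pd a w) := smooth_pd hw
  rw [gam_pd (hpw j) m i, gam_pd hw m j]
  have hgw : ContDiff ℝ (⊤ : ℕ∞) (pd j (Gam m w)) := smooth_pd (smooth_gam hw m) j
  have hsum : ContDiff ℝ (⊤ : ℕ∞) (fun y => ∑ j', cm m j j' * pd j' w y) :=
    ContDiff.sum (fun j' _ => (hpw j').const_smul (cm m j j'))
  funext y
  rw [pd_add hgw hsum i, pd_sum Finset.univ (fun j' => fun y => cm m j j' * pd j' w y)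
    (fun j' _ => (hpw j').const_smul (cm m j j')) i]
  have : ∀ j', pd i (fun y => cm m j j' * pd j' w y) y = cm m j j' * pd i (pd j' w) y :=
    fun j' => congrFun (pd_const_mul (hpw j') (cm m j j') i) y
  simp only [this]
  ring

lemma gam_Q {v w : Spt → ℝ} (g : Fin 3 → Fin 3 → Fin 3 → ℝ)
    (hv : ContDiff ℝ (⊤ : ℕ∞) v) (hw : ContDiff ℝ (⊤ : ℕ∞) w) (m : Fin 5) :
    Gam m (Q g v w) = fun y => Q g (Gam m v) w y + Q g v (Gam m w) y + Q (Tm m g) v w y := by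
  have hpv : ∀ a, ContDiff ℝ (⊤ : ℕ∞) (pd a v) := smooth_pd hv
  have hppw : ∀ a b, ContDiff ℝ (⊤ : ℕ∞) (pd a (pd b w)) := fun a b => smooth_pd (smooth_pd hw b) a
  have hterm : ∀ k i j : Fin 3, ContDiff ℝ (⊤ : ℕ∞) (fun y => g k i j * pd k v y * pd i (pd j w) y) := by
    intro k i j
    have h1 := hpv k; have h2 := hppw i j; fun_prop
  have hin : ∀ k i : Fin 3, ContDiff ℝ (⊤ : ℕ∞) (fun y => ∑ j, g k i j * pd k v y * pd i (pd j w) y) :=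
    fun k i => ContDiff.sum (fun j _ => hterm k i j)
  have hin2 : ∀ k : Fin 3,
      ContDiff ℝ (⊤ : ℕ∞) (fun y => ∑ i, ∑ j, g k i j * pd k v y * pd i (pd j w) y) :=
    fun k => ContDiff.sum (fun i _ => hin k i)
  have step1 : Gam m (Q g v w)
      = fun y => ∑ k, ∑ i, ∑ j, Gam m (fun y => g k i j * pd k v y * pd i (pd j w) y) y := by
    unfold Q
    rw [gam_sum Finset.univ _ (fun k _ => hin2 k) m]
    funext y
    refine Finset.sum_congr rfl (fun k _ => ?_)
    rw [gam_sum Finset.univ _ (fun i _ => hin k i) m]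
    refine Finset.sum_congr rfl (fun i _ => ?_)
    rw [gam_sum Finset.univ _ (fun j _ => hterm k i j) m]
  have step2 : ∀ k i j : Fin 3, Gam m (fun y => g k i j * pd k v y * pd i (pd j w) y)
      = fun y => g k i j * ((pd k (Gam m v) y + ∑ k', cm m k k' * pd k' v y) * pd i (pd j w) y
        + pd k v y * (pd i (pd j (Gam m w)) y + (∑ i', cm m i i' * pd i' (pd j w) y)
          + ∑ j', cm m j j' * pd i (pd j' w) y)) := by
    intro k i j
    have e : (fun y => g k i j * pd k v y * pd i (pd j w) y)
        = fun y => g k i j * (pd k v y * pd i (pd j w) y) := by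
      funext y; ring
    rw [e, gam_const_mul (by have h1 := hpv k; have h2 := hppw i j; fun_prop) (g k i j) m,
      gam_mul (hpv k) (hppw i j) m, gam_pd hv m k, gam_pdpd hw m i j]
  rw [step1]
  funext y
  simp only [fun k i j => congrFun (step2 k i j) y]
  unfold Q Tm
  simp only [Fin.sum_univ_three]
  ring

def dnv (θ : ℝ) : Fin 3 → ℝ := ![(0 : ℝ), -Real.sin θ, Real.cos θ]

lemma hasDerivAt_nv (k : Fin 3) (θ : ℝ) : HasDerivAt (fun θ => nullVec θ k) (dnv θ k) θ := by
  fin_cases k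
  · simpa [nullVec, dnv] using hasDerivAt_const θ (-1 : ℝ)
  · simpa [nullVec, dnv] using Real.hasDerivAt_cos θ
  · simpa [nullVec, dnv] using Real.hasDerivAt_sin θ

lemma null_add {g₁ g₂ : Fin 3 → Fin 3 → Fin 3 → ℝ} (h₁ : NullCond g₁) (h₂ : NullCond g₂) :
    NullCond (fun k i j => g₁ k i j + g₂ k i j) := by
  intro θ
  have e1 := h₁ θ; have e2 := h₂ θ
  simp only [Fin.sum_univ_three] at e1 e2 ⊢
  linear_combination e1 + e2

lemma null_smul {g : Fin 3 → Fin 3 → Fin 3 → ℝ} (c : ℝ) (h : NullCond g) :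
    NullCond (fun k i j => c * g k i j) := by
  intro θ
  have e := h θ
  simp only [Fin.sum_univ_three] at e ⊢
  linear_combination c * e

set_option maxHeartbeats 2000000 in
set_option maxRecDepth 16000 in
lemma null_Tm {g : Fin 3 → Fin 3 → Fin 3 → ℝ} (h : NullCond g) (m : Fin 5) :
    NullCond (Tm m g) := by
  fin_cases m
  · show NullCond (Tm 0 g); intro θ; simp [Tm, cm]
  · show NullCond (Tm 1 g); intro θ; simp [Tm, cm]
  · show NullCond (Tm 2 g); intro θ; simp [Tm, cm]
  · -- rotation case: derivative of the null form
    show NullCond (Tm 3 g)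
    intro θ
    set F : ℝ → ℝ := fun θ => ∑ k, ∑ i, ∑ j,
      g k i j * nullVec θ k * nullVec θ i * nullVec θ j with hF
    have hD : HasDerivAt F (∑ k, ∑ i, ∑ j,
        (((0 * nullVec θ k + g k i j * dnv θ k) * nullVec θ i
          + g k i j * nullVec θ k * dnv θ i) * nullVec θ j
          + g k i j * nullVec θ k * nullVec θ i * dnv θ j)) θ := by
      apply HasDerivAt.fun_sum; intro k _
      apply HasDerivAt.fun_sum; intro i _
      apply HasDerivAt.fun_sum; intro j _
      exact (((hasDerivAt_const θ (g k i j)).mul (hasDerivAt_nv k θ)).mul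
        (hasDerivAt_nv i θ)).mul (hasDerivAt_nv j θ)
    have hF0 : F = fun _ => 0 := funext h
    rw [hF0] at hD
    have hE := hD.unique (hasDerivAt_const θ 0)
    simp only [Fin.sum_univ_three] at hE ⊢
    simp [Tm, cm, nullVec, dnv] at hE ⊢
    linear_combination hE
  · show NullCond (Tm 4 g)
    intro θ
    have e := h θ
    simp only [Fin.sum_univ_three] at e ⊢
    simp [Tm, cm, nullVec] at e ⊢
    linear_combination -3 * e

lemma mem_pairsLe {α : Fin 5 → ℕ} {p : (Fin 5 → ℕ) × (Fin 5 → ℕ)} :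
    p ∈ pairsLe α ↔ ∀ i, p.1 i + p.2 i ≤ α i := by
  unfold pairsLe
  simp only [Finset.mem_filter, Finset.mem_product, Fintype.mem_piFinset, Finset.mem_range,
    Nat.lt_succ_iff]
  constructor
  · rintro ⟨-, h⟩; exact h
  · intro h
    exact ⟨⟨fun i => le_trans (Nat.le_add_right _ _) (h i),
      fun i => le_trans (Nat.le_add_left _ _) (h i)⟩, h⟩

lemma pairsLe_mono {α β : Fin 5 → ℕ} (h : ∀ i, β i ≤ α i) : pairsLe β ⊆ pairsLe α := by
  intro p hp
  rw [mem_pairsLe] at hp ⊢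
  exact fun i => le_trans (hp i) (h i)

lemma smooth_iter {v : Spt → ℝ} (hv : ContDiff ℝ (⊤ : ℕ∞) v) (m : Fin 5) (n : ℕ) :
    ContDiff ℝ (⊤ : ℕ∞) ((Gam m)^[n] v) := by
  induction n with
  | zero => simpa using hv
  | succ n ih => rw [Function.iterate_succ_apply']; exact smooth_gam ih m

lemma smooth_gamPow {u : Spt → ℝ} (hu : ContDiff ℝ (⊤ : ℕ∞) u) (α : Fin 5 → ℕ) :
    ContDiff ℝ (⊤ : ℕ∞) (GamPow α u) := by
  unfold GamPow
  exact smooth_iter (smooth_iter (smooth_iter (smooth_iter (smooth_iter hu 4 (α 4)) 3 (α 3))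
    2 (α 2)) 1 (α 1)) 0 (α 0)

lemma gamPow_succ {u : Spt → ℝ} (m : Fin 5) (β : Fin 5 → ℕ) (h : ∀ i, i < m → β i = 0) :
    GamPow (β + Pi.single m 1) u = Gam m (GamPow β u) := by
  have hap : ∀ i : Fin 5, (β + (Pi.single m 1 : Fin 5 → ℕ)) i = β i + if i = m then 1 else 0 := by
    intro i; simp [Pi.single_apply]
  fin_cases m
  · unfold GamPow
    rw [hap 0, hap 1, hap 2, hap 3, hap 4]
    simp only [hap]
    simp
    rw [← Function.iterate_succ_apply, Function.iterate_succ_apply']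
  · have h0 : β 0 = 0 := h 0 (by decide)
    unfold GamPow
    rw [hap 0, hap 1, hap 2, hap 3, hap 4]
    simp only [hap]
    simp [h0]
    rw [← Function.iterate_succ_apply, Function.iterate_succ_apply']
  · have h0 : β 0 = 0 := h 0 (by decide)
    have h1 : β 1 = 0 := h 1 (by decide)
    unfold GamPow
    rw [hap 0, hap 1, hap 2, hap 3, hap 4]
    simp only [hap]
    simp [h0, h1]
    rw [← Function.iterate_succ_apply, Function.iterate_succ_apply']
  · have h0 : β 0 = 0 := h 0 (by decide)
    have h1 : β 1 = 0 := h 1 (by decide)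
    have h2 : β 2 = 0 := h 2 (by decide)
    unfold GamPow
    rw [hap 0, hap 1, hap 2, hap 3, hap 4]
    simp only [hap]
    simp [h0, h1, h2]
    rw [← Function.iterate_succ_apply, Function.iterate_succ_apply']
  · have h0 : β 0 = 0 := h 0 (by decide)
    have h1 : β 1 = 0 := h 1 (by decide)
    have h2 : β 2 = 0 := h 2 (by decide)
    have h3 : β 3 = 0 := h 3 (by decide)
    unfold GamPow
    rw [hap 0, hap 1, hap 2, hap 3, hap 4]
    simp only [hap]
    simp [h0, h1, h2, h3]
    rw [← Function.iterate_succ_apply, Function.iterate_succ_apply']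

lemma exists_min_decomp (α : Fin 5 → ℕ) (hα : α ≠ 0) :
    ∃ (m : Fin 5) (β : Fin 5 → ℕ), α = β + Pi.single m 1 ∧ (∀ i, i < m → β i = 0) := by
  classical
  set s := Finset.univ.filter (fun i => α i ≠ 0) with hs
  have hne : s.Nonempty := by
    by_contra hc
    apply hα
    funext i
    have : i ∉ s := fun hi => hc ⟨i, hi⟩
    simp [hs] at this
    exact this
  set m := s.min' hne with hm
  have hmem : m ∈ s := s.min'_mem hne
  have hαm : α m ≠ 0 := by simpa [hs] using hmem
  refine ⟨m, Function.update α m (α m - 1), ?_, ?_⟩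
  · funext i
    by_cases hi : i = m
    · subst hi
      simp only [Pi.add_apply, Function.update_self, Pi.single_eq_same]
      omega
    · simp [Function.update_of_ne hi, Pi.single_apply, hi]
  · intro i hilt
    have hne' : i ≠ m := ne_of_lt hilt
    rw [Function.update_of_ne hne']
    by_contra hc
    have : i ∈ s := by simp [hs, hc]
    exact absurd (s.min'_le i this) (not_le.mpr hilt)

lemma Q_zero {v w : Spt → ℝ} (y : Spt) : Q (0 : Fin 3 → Fin 3 → Fin 3 → ℝ) v w y = 0 := by
  simp [Q]

lemma Q_apply_add {v w : Spt → ℝ} (g₁ g₂ : Fin 3 → Fin 3 → Fin 3 → ℝ) (y : Spt) :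
    Q (g₁ + g₂) v w y = Q g₁ v w y + Q g₂ v w y := by
  simp [Q, add_mul, Finset.sum_add_distrib]

lemma Q_combo {v w : Spt → ℝ} (g₁ g₂ : Fin 3 → Fin 3 → Fin 3 → ℝ) (c : ℝ) (y : Spt) :
    Q (fun k i j => g₁ k i j + c * g₂ k i j) v w y = Q g₁ v w y + c * Q g₂ v w y := by
  simp only [Q, Fin.sum_univ_three]
  ring

lemma null_zero' : NullCond (0 : Fin 3 → Fin 3 → Fin 3 → ℝ) := by intro θ; simp

theorem key (g : Fin 3 → Fin 3 → Fin 3 → ℝ) (hnull : NullCond g)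
    (u : Spt → ℝ) (hu : ContDiff ℝ (⊤ : ℕ∞) u) (heq : ∀ y, Box u y = Q g u u y) :
    ∀ n : ℕ, ∀ α : Fin 5 → ℕ, (∑ i, α i) = n →
      ∃ G : (Fin 5 → ℕ) → (Fin 5 → ℕ) → Fin 3 → Fin 3 → Fin 3 → ℝ,
        (∀ α₁ α₂ : Fin 5 → ℕ, (α₁, α₂) ∈ pairsLe α → NullCond (G α₁ α₂)) ∧
        G α 0 = g ∧ G 0 α = g ∧
        ∀ y : Spt, Box (GamPow α u) y
          = ∑ p ∈ pairsLe α, Q (G p.1 p.2) (GamPow p.1 u) (GamPow p.2 u) y := by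
  intro n
  induction n using Nat.strong_induction_on with
  | _ n ih =>
  intro α hsum
  classical
  by_cases hα : α = 0
  · subst hα
    have hp0 : pairsLe (0 : Fin 5 → ℕ) = {((0 : Fin 5 → ℕ), (0 : Fin 5 → ℕ))} := by
      ext p
      rw [mem_pairsLe, Finset.mem_singleton, Prod.ext_iff]
      constructor
      · intro h
        constructor <;> funext i <;> (have := h i; simp only [Pi.zero_apply] at this ⊢; omega)
      · rintro ⟨h1, h2⟩ i
        simp [h1, h2]
    have hGP0 : GamPow 0 u = u := rfl
    refine ⟨fun _ _ => g, fun _ _ _ => hnull, rfl, rfl, ?_⟩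
    intro y
    rw [hp0, Finset.sum_singleton, hGP0]
    exact heq y
  · obtain ⟨m, β, hdec, hm⟩ := exists_min_decomp α hα
    set e : Fin 5 → ℕ := Pi.single m 1 with he
    have hsume : (∑ i, e i) = 1 := by
      rw [he]
      simp [Finset.sum_pi_single]
    have hβlt : (∑ i, β i) < n := by
      rw [← hsum, hdec]
      have : (∑ i, (β + e) i) = (∑ i, β i) + (∑ i, e i) := by
        simp [Finset.sum_add_distrib]
      rw [this, hsume]
      omega
    obtain ⟨G', hG'null, hG'α0, hG'0α, hG'eq⟩ := ih (∑ i, β i) hβlt β rfl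
    set v : Spt → ℝ := GamPow β u with hvdef
    have hv : ContDiff ℝ (⊤ : ℕ∞) v := smooth_gamPow hu β
    set c : ℝ := if m = 4 then 2 else 0 with hc
    have hαm : α m = β m + 1 := by rw [hdec]; simp [he]
    have hαβ : ∀ i, α i = β i + e i := fun i => by rw [hdec]; rfl
    have hsubβ : ∀ i, β i ≤ α i := fun i => by rw [hαβ i]; omega
    -- membership characterizations
    have hmemβ : ∀ p : (Fin 5 → ℕ) × (Fin 5 → ℕ), p ∈ pairsLe β → ∀ i, i < m → p.1 i = 0 := by
      intro p hp i him
      have := (mem_pairsLe.mp hp) i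
      have := hm i him
      omega
    have hmemβ2 : ∀ p : (Fin 5 → ℕ) × (Fin 5 → ℕ), p ∈ pairsLe β → ∀ i, i < m → p.2 i = 0 := by
      intro p hp i him
      have := (mem_pairsLe.mp hp) i
      have := hm i him
      omega
    have hcancel : ∀ q : Fin 5 → ℕ, (q + e) - e = q := by
      intro q; funext i; simp
    have hcancel2 : ∀ q : Fin 5 → ℕ, 0 < q m → (q - e) + e = q := by
      intro q hq; funext i
      by_cases hi : i = m
      · subst hi; simp [he, Pi.single_eq_same]; omega
      · simp [he, Pi.single_apply, hi]
    -- the new coefficients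
    refine ⟨fun q1 q2 =>
      (if 0 < q1 m ∧ (q1 - e, q2) ∈ pairsLe β then G' (q1 - e) q2 else 0)
      + (if 0 < q2 m ∧ (q1, q2 - e) ∈ pairsLe β then G' q1 (q2 - e) else 0)
      + (if (q1, q2) ∈ pairsLe β then
          (fun k i j => Tm m (G' q1 q2) k i j + c * G' q1 q2 k i j) else 0),
      ?_, ?_, ?_, ?_⟩
    · -- null condition
      intro q1 q2 _
      have hA : NullCond (if 0 < q1 m ∧ (q1 - e, q2) ∈ pairsLe β then G' (q1 - e) q2 else 0) := by
        split_ifs with h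
        · exact hG'null _ _ h.2
        · exact null_zero'
      have hB : NullCond (if 0 < q2 m ∧ (q1, q2 - e) ∈ pairsLe β then G' q1 (q2 - e) else 0) := by
        split_ifs with h
        · exact hG'null _ _ h.2
        · exact null_zero'
      have hC : NullCond (if (q1, q2) ∈ pairsLe β then
          (fun k i j => Tm m (G' q1 q2) k i j + c * G' q1 q2 k i j) else 0) := by
        split_ifs with h
        · exact null_add (null_Tm (hG'null _ _ h) m) (null_smul c (hG'null _ _ h))
        · exact null_zero'
      have : ∀ (g₁ g₂ : Fin 3 → Fin 3 → Fin 3 → ℝ), NullCond g₁ → NullCond g₂ →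
          NullCond (g₁ + g₂) := by
        intro g₁ g₂ h₁ h₂
        have := null_add h₁ h₂
        convert this using 2
        rfl
      exact this _ _ (this _ _ hA hB) hC
    · -- G α 0 = g
      have c1 : 0 < α m ∧ ((α - e, (0 : Fin 5 → ℕ)) ∈ pairsLe β) := by
        constructor
        · omega
        · rw [mem_pairsLe]
          intro i
          have : α - e = β := by rw [hdec]; exact hcancel β
          rw [this]
          simp
      have c2 : ¬ (0 < (0 : Fin 5 → ℕ) m ∧ ((α, (0:Fin 5 → ℕ) - e) ∈ pairsLe β)) := by
        simp
      have c3 : ¬ ((α, (0 : Fin 5 → ℕ)) ∈ pairsLe β) := by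
        rw [mem_pairsLe]
        push_neg
        exact ⟨m, by simp [hαm]⟩
      beta_reduce
      rw [if_pos c1, if_neg c2, if_neg c3]
      have : α - e = β := by rw [hdec]; exact hcancel β
      rw [this, hG'α0]
      simp
    · -- G 0 α = g
      have c1 : ¬ (0 < (0 : Fin 5 → ℕ) m ∧ (((0:Fin 5 → ℕ)) - e, α) ∈ pairsLe β) := by simp
      have c2 : 0 < α m ∧ (((0 : Fin 5 → ℕ), α - e) ∈ pairsLe β) := by
        constructor
        · omega
        · rw [mem_pairsLe]
          intro i
          have : α - e = β := by rw [hdec]; exact hcancel β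
          rw [this]
          simp
      have c3 : ¬ (((0 : Fin 5 → ℕ), α) ∈ pairsLe β) := by
        rw [mem_pairsLe]
        push_neg
        exact ⟨m, by simp [hαm]⟩
      beta_reduce
      rw [if_pos c2, if_neg c1, if_neg c3]
      have : α - e = β := by rw [hdec]; exact hcancel β
      rw [this, hG'0α]
      simp
    · -- the identity
      intro y
      beta_reduce
      set SA := pairsLe α with hSA
      set SB := pairsLe β with hSB
      have memSA : ∀ p : (Fin 5 → ℕ) × (Fin 5 → ℕ), p ∈ SA ↔ ∀ i, p.1 i + p.2 i ≤ α i :=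
        fun p => by rw [hSA]; exact mem_pairsLe
      have memSB : ∀ p : (Fin 5 → ℕ) × (Fin 5 → ℕ), p ∈ SB ↔ ∀ i, p.1 i + p.2 i ≤ β i :=
        fun p => by rw [hSB]; exact mem_pairsLe
      -- smoothness facts
      have hQs : ∀ p ∈ SB,
          ContDiff ℝ (⊤ : ℕ∞) (Q (G' p.1 p.2) (GamPow p.1 u) (GamPow p.2 u)) :=
        fun p _ => smooth_Q _ (smooth_gamPow hu p.1) (smooth_gamPow hu p.2)
      have hm1 : GamPow α u = Gam m v := by rw [hdec]; exact gamPow_succ m β hm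
      have hBoxv : Box v = fun y => ∑ p ∈ SB,
          Q (G' p.1 p.2) (GamPow p.1 u) (GamPow p.2 u) y := funext hG'eq
      have h1 : Box (GamPow α u) y = Gam m (Box v) y + c * Box v y := by
        rw [hm1]
        have := congrFun (box_gam hv m) y
        rw [this, hc]
      have h2 : Gam m (Box v) = fun y => ∑ p ∈ SB,
          Gam m (Q (G' p.1 p.2) (GamPow p.1 u) (GamPow p.2 u)) y := by
        rw [hBoxv]
        exact gam_sum SB _ hQs m
      have h3 : ∀ p ∈ SB,
          Gam m (Q (G' p.1 p.2) (GamPow p.1 u) (GamPow p.2 u)) y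
            = Q (G' p.1 p.2) (GamPow (p.1 + e) u) (GamPow p.2 u) y
              + Q (G' p.1 p.2) (GamPow p.1 u) (GamPow (p.2 + e) u) y
              + Q (Tm m (G' p.1 p.2)) (GamPow p.1 u) (GamPow p.2 u) y := by
        intro p hp
        have hp' : p ∈ pairsLe β := by rw [← hSB]; exact hp
        rw [congrFun (gam_Q (G' p.1 p.2) (smooth_gamPow hu p.1) (smooth_gamPow hu p.2) m) y]
        rw [← gamPow_succ m p.1 (hmemβ p hp'), ← gamPow_succ m p.2 (hmemβ2 p hp')]
      -- LHS value
      have hLHS : Box (GamPow α u) y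
          = (∑ p ∈ SB, Q (G' p.1 p.2) (GamPow (p.1 + e) u) (GamPow p.2 u) y)
            + (∑ p ∈ SB, Q (G' p.1 p.2) (GamPow p.1 u) (GamPow (p.2 + e) u) y)
            + ((∑ p ∈ SB, Q (Tm m (G' p.1 p.2)) (GamPow p.1 u) (GamPow p.2 u) y)
              + c * ∑ p ∈ SB, Q (G' p.1 p.2) (GamPow p.1 u) (GamPow p.2 u) y) := by
        rw [h1, congrFun h2 y, Finset.sum_congr rfl h3, hG'eq y]
        rw [Finset.sum_add_distrib, Finset.sum_add_distrib]
        ring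
      rw [hLHS]
      -- RHS: split each summand into three pieces
      have hsplit : ∀ q : (Fin 5 → ℕ) × (Fin 5 → ℕ),
          Q ((if 0 < q.1 m ∧ (q.1 - e, q.2) ∈ SB then G' (q.1 - e) q.2 else 0)
            + (if 0 < q.2 m ∧ (q.1, q.2 - e) ∈ SB then G' q.1 (q.2 - e) else 0)
            + (if (q.1, q.2) ∈ SB then
                (fun k i j => Tm m (G' q.1 q.2) k i j + c * G' q.1 q.2 k i j) else 0))
            (GamPow q.1 u) (GamPow q.2 u) y
          = (if 0 < q.1 m ∧ (q.1 - e, q.2) ∈ SB then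
              Q (G' (q.1 - e) q.2) (GamPow q.1 u) (GamPow q.2 u) y else 0)
            + (if 0 < q.2 m ∧ (q.1, q.2 - e) ∈ SB then
              Q (G' q.1 (q.2 - e)) (GamPow q.1 u) (GamPow q.2 u) y else 0)
            + (if (q.1, q.2) ∈ SB then
              Q (Tm m (G' q.1 q.2)) (GamPow q.1 u) (GamPow q.2 u) y
                + c * Q (G' q.1 q.2) (GamPow q.1 u) (GamPow q.2 u) y else 0) := by
        intro q
        rw [Q_apply_add, Q_apply_add]
        congr 1
        · congr 1
          · rw [apply_ite (fun gg => Q gg (GamPow q.1 u) (GamPow q.2 u) y), Q_zero]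
          · rw [apply_ite (fun gg => Q gg (GamPow q.1 u) (GamPow q.2 u) y), Q_zero]
        · rw [apply_ite (fun gg => Q gg (GamPow q.1 u) (GamPow q.2 u) y), Q_zero]
          congr 1
          exact Q_combo _ _ c y
      rw [Finset.sum_congr rfl (fun q _ => hsplit q)]
      rw [Finset.sum_add_distrib, Finset.sum_add_distrib]
      congr 1
      · congr 1
        · -- first piece
          rw [← Finset.sum_filter]
          refine Finset.sum_nbij' (fun p => (p.1 + e, p.2)) (fun q => (q.1 - e, q.2))
            ?_ ?_ ?_ ?_ ?_
          · intro p hp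
            rw [Finset.mem_filter]
            refine ⟨?_, ?_, ?_⟩
            · rw [memSA]
              intro i
              have := (memSB _).mp hp i
              rw [hαβ i]
              simp only [Pi.add_apply]
              omega
            · simp [he, Pi.single_eq_same]
            · have he1 : (p.1 + e) - e = p.1 := hcancel p.1
              rw [he1]
              exact hp
          · intro q hq
            exact ((Finset.mem_filter.mp hq).2).2
          · intro p hp
            exact Prod.ext (hcancel p.1) rfl
          · intro q hq
            have hq1 := (Finset.mem_filter.mp hq).2.1
            exact Prod.ext (hcancel2 q.1 hq1) rfl
          · intro p hp
            simp only
            rw [hcancel p.1]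
        · -- second piece
          rw [← Finset.sum_filter]
          refine Finset.sum_nbij' (fun p => (p.1, p.2 + e)) (fun q => (q.1, q.2 - e))
            ?_ ?_ ?_ ?_ ?_
          · intro p hp
            rw [Finset.mem_filter]
            refine ⟨?_, ?_, ?_⟩
            · rw [memSA]
              intro i
              have := (memSB _).mp hp i
              rw [hαβ i]
              simp only [Pi.add_apply]
              omega
            · simp [he, Pi.single_eq_same]
            · have he2 : (p.2 + e) - e = p.2 := hcancel p.2
              rw [he2]
              exact hp
          · intro q hq
            exact ((Finset.mem_filter.mp hq).2).2
          · intro p hp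
            exact Prod.ext rfl (hcancel p.2)
          · intro q hq
            have hq1 := (Finset.mem_filter.mp hq).2.1
            exact Prod.ext rfl (hcancel2 q.2 hq1)
          · intro p hp
            simp only
            rw [hcancel p.2]
      · -- third piece
        rw [← Finset.sum_filter]
        have hfe : SA.filter (fun q => q ∈ SB) = SB := by
          rw [Finset.filter_mem_eq_inter]
          apply Finset.inter_eq_right.mpr
          rw [hSA, hSB]
          exact pairsLe_mono hsubβ
        rw [hfe, Finset.sum_add_distrib, ← Finset.mul_sum]

/-- Commuting Γ^α with the equation: □Γ^α u = Σ_{α₁+α₂≤α} g^{kij}_{α₁,α₂} ∂_kΓ^{α₁}u ∂_{ij}Γ^{α₂}u,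
where each g_{α₁,α₂} still satisfies the null condition and g_{α,0} = g_{0,α} = g. -/
theorem statement7
    (g : Fin 3 → Fin 3 → Fin 3 → ℝ)
    (hsym : ∀ k i j, g k i j = g k j i)
    (hnull : NullCond g)
    (u : Spt → ℝ) (hu : ContDiff ℝ (⊤ : ℕ∞) u)
    (heq : ∀ y : Spt, Box u y = Quad g u y) :
    ∀ α : Fin 5 → ℕ,
      ∃ G : (Fin 5 → ℕ) → (Fin 5 → ℕ) → Fin 3 → Fin 3 → Fin 3 → ℝ,
        (∀ α₁ α₂ : Fin 5 → ℕ, (α₁, α₂) ∈ pairsLe α → NullCond (G α₁ α₂)) ∧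
        G α 0 = g ∧ G 0 α = g ∧
        ∀ y : Spt,
          Box (GamPow α u) y =
            ∑ p ∈ pairsLe α, ∑ k, ∑ i, ∑ j,
              G p.1 p.2 k i j * pd k (GamPow p.1 u) y * pd i (pd j (GamPow p.2 u)) y := by
  intro α
  have heq' : ∀ y : Spt, Box u y = Q g u u y := fun y => heq y
  obtain ⟨G, h1, h2, h3, h4⟩ := key g hnull u hu heq' (∑ i, α i) α rfl
  exact ⟨G, h1, h2, h3, fun y => h4 y⟩
end
end

section
/- There is an absolute constant C > 0 such that for every twice continuously differentiable function ũ = ũ(t,x) on [1,∞) × ℝ², every t ≥ 1 and every x with r = |x| ≥ t/10, one has ⟨r − t⟩ |∂² ũ(t,x)| ≤ C ( |(∂Γ^{≤1} ũ)(t,x)| + (r + t) |(□ũ)(t,x)| ), where |∂²ũ| denotes the Euclidean norm of all second derivatives ∂_a∂_b ũ with a,b ∈ {0,1,2} (∂_0 = ∂_t). -/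
open MeasureTheory Real

noncomputable section

set_option maxHeartbeats 1600000

section Aux
variable {u : Spt → ℝ}

lemma fderiv_contDiff (hu : ContDiff ℝ 2 u) : ContDiff ℝ 1 (fderiv ℝ u) := by
  have h : ContDiff ℝ (1+1) u := by norm_num [hu]
  exact (contDiff_succ_iff_fderiv.mp h).2.2

lemma pd_contDiff (hu : ContDiff ℝ 2 u) (k : Fin 3) : ContDiff ℝ 1 (pd k u) := by
  exact (fderiv_contDiff hu).clm_apply contDiff_const

lemma coord_hasFDerivAt (k : Fin 3) (y : Spt) :
    HasFDerivAt (fun z : Spt => z k) (ContinuousLinearMap.proj k : Spt →L[ℝ] ℝ) y :=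
  (ContinuousLinearMap.proj k : Spt →L[ℝ] ℝ).hasFDerivAt

lemma pd_gam4 (hu : ContDiff ℝ 2 u) (a : Fin 3) (y : Spt) :
    pd a (Gam 4 u) y = pd a u y + y 0 * pd a (pd 0 u) y + y 1 * pd a (pd 1 u) y
      + y 2 * pd a (pd 2 u) y := by
  have hk : ∀ k : Fin 3, HasFDerivAt (pd k u) (fderiv ℝ (pd k u) y) y :=
    fun k => (((pd_contDiff hu k).differentiable one_ne_zero) y).hasFDerivAt
  have htot := (((coord_hasFDerivAt 0 y).mul (hk 0)).add
      ((coord_hasFDerivAt 1 y).mul (hk 1))).add ((coord_hasFDerivAt 2 y).mul (hk 2))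
  have hgam : Gam 4 u = fun y : Spt => y 0 * pd 0 u y + y 1 * pd 1 u y + y 2 * pd 2 u y := rfl
  show fderiv ℝ (Gam 4 u) y (Pi.single a 1) = _
  rw [hgam, (show HasFDerivAt (fun y : Spt => y 0 * pd 0 u y + y 1 * pd 1 u y + y 2 * pd 2 u y) _ y from htot).fderiv]
  simp only [ContinuousLinearMap.add_apply, ContinuousLinearMap.smul_apply,
    ContinuousLinearMap.proj_apply, smul_eq_mul]
  show y 0 * pd a (pd 0 u) y + pd 0 u y * (Pi.single a 1 : Spt) 0
      + (y 1 * pd a (pd 1 u) y + pd 1 u y * (Pi.single a 1 : Spt) 1)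
      + (y 2 * pd a (pd 2 u) y + pd 2 u y * (Pi.single a 1 : Spt) 2) = _
  fin_cases a <;> simp [Pi.single_apply] <;> ring

lemma pd_gam3 (hu : ContDiff ℝ 2 u) (a : Fin 3) (y : Spt) :
    pd a (Gam 3 u) y = (if a = 1 then pd 2 u y else 0) - (if a = 2 then pd 1 u y else 0)
      + y 1 * pd a (pd 2 u) y - y 2 * pd a (pd 1 u) y := by
  have hk : ∀ k : Fin 3, HasFDerivAt (pd k u) (fderiv ℝ (pd k u) y) y :=
    fun k => (((pd_contDiff hu k).differentiable one_ne_zero) y).hasFDerivAt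
  have htot := ((coord_hasFDerivAt 1 y).mul (hk 2)).sub ((coord_hasFDerivAt 2 y).mul (hk 1))
  have hgam : Gam 3 u = fun y : Spt => y 1 * pd 2 u y - y 2 * pd 1 u y := rfl
  show fderiv ℝ (Gam 3 u) y (Pi.single a 1) = _
  rw [hgam, (show HasFDerivAt (fun y : Spt => y 1 * pd 2 u y - y 2 * pd 1 u y) _ y from htot).fderiv]
  simp only [ContinuousLinearMap.sub_apply, ContinuousLinearMap.add_apply,
    ContinuousLinearMap.smul_apply, ContinuousLinearMap.proj_apply, smul_eq_mul]
  show y 1 * pd a (pd 2 u) y + pd 2 u y * (Pi.single a 1 : Spt) 1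
      - (y 2 * pd a (pd 1 u) y + pd 1 u y * (Pi.single a 1 : Spt) 2) = _
  fin_cases a <;> simp [Pi.single_apply] <;> ring

def eidx (i : Fin 5) : Fin 5 → ℕ := fun j => if j = i then 1 else 0

lemma gp_zero (u : Spt → ℝ) : GamPow (fun _ => 0) u = u := rfl

lemma gp_e0 (u : Spt → ℝ) : GamPow (eidx 0) u = Gam 0 u := by simp [GamPow, eidx]
lemma gp_e1 (u : Spt → ℝ) : GamPow (eidx 1) u = Gam 1 u := by simp [GamPow, eidx]
lemma gp_e2 (u : Spt → ℝ) : GamPow (eidx 2) u = Gam 2 u := by simp [GamPow, eidx]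
lemma gp_e3 (u : Spt → ℝ) : GamPow (eidx 3) u = Gam 3 u := by simp [GamPow, eidx]
lemma gp_e4 (u : Spt → ℝ) : GamPow (eidx 4) u = Gam 4 u := by simp [GamPow, eidx]

lemma mem_zero : (fun _ => 0 : Fin 5 → ℕ) ∈ midx 1 := by decide
lemma mem_eidx (i : Fin 5) : eidx i ∈ midx 1 := by fin_cases i <;> decide

lemma le_Q (u : Spt → ℝ) (y : Spt) (α : Fin 5 → ℕ) (hα : α ∈ midx 1) (i : Fin 3) :
    |pd i (GamPow α u) y| ≤
      Real.sqrt (∑ β ∈ midx 1, ∑ j : Fin 3, (pd j (GamPow β u) y)^2) := by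
  have h1 : (pd i (GamPow α u) y)^2 ≤ ∑ j : Fin 3, (pd j (GamPow α u) y)^2 :=
    Finset.single_le_sum (f := fun j => (pd j (GamPow α u) y)^2) (fun _ _ => sq_nonneg _) (Finset.mem_univ i)
  have h2 : (∑ j : Fin 3, (pd j (GamPow α u) y)^2) ≤
      ∑ β ∈ midx 1, ∑ j : Fin 3, (pd j (GamPow β u) y)^2 :=
    Finset.single_le_sum (f := fun β => ∑ j : Fin 3, (pd j (GamPow β u) y)^2) (fun _ _ => Finset.sum_nonneg fun _ _ => sq_nonneg _) hα
  calc |pd i (GamPow α u) y| = Real.sqrt ((pd i (GamPow α u) y)^2) :=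
        (Real.sqrt_sq_eq_abs _).symm
    _ ≤ _ := Real.sqrt_le_sqrt (by linarith)

lemma sqrt_sum_le (v : Fin 3 → Fin 3 → ℝ) :
    Real.sqrt (∑ a : Fin 3, ∑ b : Fin 3, (v a b)^2) ≤ ∑ a : Fin 3, ∑ b : Fin 3, |v a b| := by
  have h : (∑ a : Fin 3, ∑ b : Fin 3, (v a b)^2) ≤ (∑ a : Fin 3, ∑ b : Fin 3, |v a b|)^2 := by
    calc (∑ a : Fin 3, ∑ b : Fin 3, (v a b)^2) = ∑ a : Fin 3, ∑ b : Fin 3, |v a b|^2 := by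
          simp [sq_abs]
      _ ≤ ∑ a : Fin 3, (∑ b : Fin 3, |v a b|)^2 := by
          gcongr with a ha
          exact Finset.sum_sq_le_sq_sum_of_nonneg fun _ _ => abs_nonneg _
      _ ≤ (∑ a : Fin 3, ∑ b : Fin 3, |v a b|)^2 :=
          Finset.sum_sq_le_sq_sum_of_nonneg fun _ _ => Finset.sum_nonneg fun _ _ => abs_nonneg _
  calc Real.sqrt (∑ a : Fin 3, ∑ b : Fin 3, (v a b)^2)
      ≤ Real.sqrt ((∑ a : Fin 3, ∑ b : Fin 3, |v a b|)^2) := Real.sqrt_le_sqrt h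
    _ = _ := Real.sqrt_sq (Finset.sum_nonneg fun _ _ => Finset.sum_nonneg fun _ _ => abs_nonneg _)

lemma jb_le (s : ℝ) : jb s ≤ 1 + |s| := by
  rw [jb]
  calc Real.sqrt (1 + s^2) ≤ Real.sqrt ((1+|s|)^2) := by
        apply Real.sqrt_le_sqrt; nlinarith [abs_nonneg s, sq_abs s]
    _ = 1 + |s| := Real.sqrt_sq (by positivity)

lemma st0 (t : ℝ) (x : Sp) : st t x 0 = t := rfl
lemma st1 (t : ℝ) (x : Sp) : st t x 1 = x 0 := rfl
lemma st2 (t : ℝ) (x : Sp) : st t x 2 = x 1 := rfl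


section SymmAux
variable {u : Spt → ℝ}
lemma pd_symm (hu : ContDiff ℝ 2 u) (a b : Fin 3) (y : Spt) :
    pd a (pd b u) y = pd b (pd a u) y := by
  have hdu : Differentiable ℝ u := hu.differentiable (by norm_num)
  have hf' : ∀ z, HasFDerivAt u (fderiv ℝ u z) z := fun z => (hdu z).hasFDerivAt
  have hd2 : DifferentiableAt ℝ (fderiv ℝ u) y :=
    ((fderiv_contDiff hu).differentiable one_ne_zero) y
  have h'' := second_derivative_symmetric hf' hd2.hasFDerivAt
  have key : ∀ c : Fin 3, ∀ d : Fin 3, pd c (pd d u) y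
      = fderiv ℝ (fderiv ℝ u) y (Pi.single c 1) (Pi.single d 1) := by
    intro c d
    show fderiv ℝ (fun z => (fderiv ℝ u z) (Pi.single d 1)) y (Pi.single c 1) = _
    rw [fderiv_clm_apply hd2 (differentiableAt_const _)]
    simp
  rw [key a b, key b a, h'' _ _]
end SymmAux

end Aux

section AlgAux
set_option maxHeartbeats 1000000

private lemma absmm (X Y Z : ℝ) : |X*(Y*Z)| = |X| *(|Y| * |Z|) := by
  rw [abs_mul, abs_mul]

lemma keyAlg (t A B ρ v00 v01 v02 v11 v12 v22 f G0 G1 G2 H0 H1 H2 M F : ℝ)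
    (hρ2 : ρ^2 = A^2 + B^2) (hρpos : 0 < ρ) (ht0 : 0 ≤ t) (hta : t ≤ 10*ρ)
    (e0 : t*v00 + A*v01 + B*v02 = G0) (e1 : t*v01 + A*v11 + B*v12 = G1)
    (e2 : t*v02 + A*v12 + B*v22 = G2)
    (h0 : A*v02 - B*v01 = H0) (h1 : A*v12 - B*v11 = H1) (h2 : A*v22 - B*v12 = H2)
    (ec : v00 - v11 - v22 = f)
    (hG0 : |G0| ≤ M) (hG1 : |G1| ≤ M) (hG2 : |G2| ≤ M)
    (hH0 : |H0| ≤ M) (hH1 : |H1| ≤ M) (hH2 : |H2| ≤ M)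
    (hf : (t+ρ)* |f| ≤ F) (hM : 0 ≤ M) (hF : 0 ≤ F) :
    |t - ρ| * |v00| ≤ 100*(M+F) ∧ |t - ρ| * |v01| ≤ 100*(M+F) ∧
    |t - ρ| * |v02| ≤ 100*(M+F) ∧ |t - ρ| * |v11| ≤ 100*(M+F) ∧
    |t - ρ| * |v12| ≤ 100*(M+F) ∧ |t - ρ| * |v22| ≤ 100*(M+F) := by
  have hs : 0 < t + ρ := by linarith
  have hρ2pos : (0:ℝ) < ρ^2 := by positivity
  have hA : |A| ≤ ρ := by
    apply abs_le_of_sq_le_sq _ hρpos.le; nlinarith [sq_nonneg B]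
  have hB : |B| ≤ ρ := by
    apply abs_le_of_sq_le_sq _ hρpos.le; nlinarith [sq_nonneg A]
  have htr : |t - ρ| ≤ t + ρ := abs_le.mpr ⟨by linarith, by linarith⟩
  have htr' : |t - ρ| ≤ 11*ρ := by linarith
  have habt : |t| = t := abs_of_nonneg ht0
  have htf : |t - ρ| * |f| ≤ F := le_trans (by nlinarith [abs_nonneg f]) hf
  have hMn : 0 ≤ ρ^2*M := by positivity
  have hFn : 0 ≤ ρ^2*F := by positivity
  -- the key component v00
  have B00 : |t - ρ| * |v00| ≤ 5*M + F := by
    have I0 : (t+ρ)*((t-ρ)*v00) = t*G0 - A*G1 - B*G2 - ρ^2*f - A*H2 + B*H1 := by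
      linear_combination t*e0 - A*e1 - B*e2 - ρ^2*ec + B*h1 - A*h2 - (v11+v22)*hρ2
    have hub : |(t+ρ)*((t-ρ)*v00)| ≤ (t+ρ)*(5*M+F) := by
      rw [I0]
      have c1 : |t*G0| ≤ (t+ρ)*M := by
        rw [abs_mul, habt]; apply mul_le_mul (by linarith) hG0 (abs_nonneg _) hs.le
      have c2 : |A*G1| ≤ (t+ρ)*M := by
        rw [abs_mul]; apply mul_le_mul (by linarith) hG1 (abs_nonneg _) hs.le
      have c3 : |B*G2| ≤ (t+ρ)*M := by
        rw [abs_mul]; apply mul_le_mul (by linarith) hG2 (abs_nonneg _) hs.le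
      have c4 : |ρ^2*f| ≤ ρ*F := by
        rw [abs_mul, abs_of_nonneg (sq_nonneg ρ), pow_two, mul_assoc]
        apply mul_le_mul_of_nonneg_left _ hρpos.le
        exact le_trans (by nlinarith [abs_nonneg f]) hf
      have c4' : ρ*F ≤ (t+ρ)*F := by nlinarith [mul_nonneg ht0 hF]
      have c5 : |A*H2| ≤ (t+ρ)*M := by
        rw [abs_mul]; apply mul_le_mul (by linarith) hH2 (abs_nonneg _) hs.le
      have c6 : |B*H1| ≤ (t+ρ)*M := by
        rw [abs_mul]; apply mul_le_mul (by linarith) hH1 (abs_nonneg _) hs.le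
      rw [abs_le]
      constructor
      · linarith [neg_abs_le (t*G0), neg_abs_le (A*G1), neg_abs_le (B*G2),
          neg_abs_le (ρ^2*f), neg_abs_le (A*H2), neg_abs_le (B*H1),
          le_abs_self (A*G1), le_abs_self (B*G2), le_abs_self (ρ^2*f), le_abs_self (A*H2)]
      · linarith [le_abs_self (t*G0), le_abs_self (B*H1), neg_abs_le (A*G1),
          neg_abs_le (B*G2), neg_abs_le (ρ^2*f), neg_abs_le (A*H2)]
    have heq : |(t+ρ)*((t-ρ)*v00)| = (t+ρ)*(|t - ρ| * |v00|) := by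
      rw [abs_mul, abs_mul, abs_of_pos hs]
    rw [heq] at hub
    exact le_of_mul_le_mul_left hub hs
  refine ⟨by linarith, ?_, ?_, ?_, ?_, ?_⟩
  · -- v01
    have I : ρ^2*((t-ρ)*v01) = A*((t-ρ)*G0) - (A*t)*((t-ρ)*v00) - B*((t-ρ)*H0) := by
      linear_combination ((t-ρ)*A)*e0 - ((t-ρ)*B)*h0 + ((t-ρ)*v01)*hρ2
    have d1 : |A*((t-ρ)*G0)| ≤ ρ*((11*ρ)*M) := by
      rw [absmm]; gcongr
    have d2 : |(A*t)*((t-ρ)*v00)| ≤ (ρ*(10*ρ))*(5*M+F) := by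
      rw [abs_mul, abs_mul, abs_mul, habt]
      apply mul_le_mul (mul_le_mul hA hta ht0 hρpos.le) B00 (by positivity) (by positivity)
    have d3 : |B*((t-ρ)*H0)| ≤ ρ*((11*ρ)*M) := by
      rw [absmm]; gcongr
    have hub : |ρ^2*((t-ρ)*v01)| ≤ ρ^2*(100*(M+F)) := by
      rw [I, abs_le]
      constructor
      · linarith [neg_abs_le (A*((t-ρ)*G0)), le_abs_self ((A*t)*((t-ρ)*v00)),
          neg_abs_le (B*((t-ρ)*H0)), le_abs_self (B*((t-ρ)*H0))]
      · linarith [le_abs_self (A*((t-ρ)*G0)), neg_abs_le ((A*t)*((t-ρ)*v00)),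
          le_abs_self (B*((t-ρ)*H0)), neg_abs_le (B*((t-ρ)*H0))]
    have heq : |ρ^2*((t-ρ)*v01)| = ρ^2*(|t - ρ| * |v01|) := by
      rw [abs_mul, abs_mul, abs_of_pos hρ2pos]
    rw [heq] at hub
    exact le_of_mul_le_mul_left hub hρ2pos
  · -- v02
    have I : ρ^2*((t-ρ)*v02) = B*((t-ρ)*G0) - (B*t)*((t-ρ)*v00) + A*((t-ρ)*H0) := by
      linear_combination ((t-ρ)*B)*e0 + ((t-ρ)*A)*h0 + ((t-ρ)*v02)*hρ2
    have d1 : |B*((t-ρ)*G0)| ≤ ρ*((11*ρ)*M) := by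
      rw [absmm]; gcongr
    have d2 : |(B*t)*((t-ρ)*v00)| ≤ (ρ*(10*ρ))*(5*M+F) := by
      rw [abs_mul, abs_mul, abs_mul, habt]
      apply mul_le_mul (mul_le_mul hB hta ht0 hρpos.le) B00 (by positivity) (by positivity)
    have d3 : |A*((t-ρ)*H0)| ≤ ρ*((11*ρ)*M) := by
      rw [absmm]; gcongr
    have hub : |ρ^2*((t-ρ)*v02)| ≤ ρ^2*(100*(M+F)) := by
      rw [I, abs_le]
      constructor
      · linarith [neg_abs_le (B*((t-ρ)*G0)), le_abs_self ((B*t)*((t-ρ)*v00)),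
          neg_abs_le (A*((t-ρ)*H0))]
      · linarith [le_abs_self (B*((t-ρ)*G0)), neg_abs_le ((B*t)*((t-ρ)*v00)),
          le_abs_self (A*((t-ρ)*H0))]
    have heq : |ρ^2*((t-ρ)*v02)| = ρ^2*(|t - ρ| * |v02|) := by
      rw [abs_mul, abs_mul, abs_of_pos hρ2pos]
    rw [heq] at hub
    exact le_of_mul_le_mul_left hub hρ2pos
  · -- v11
    have I : ρ^2*((t-ρ)*v11) = (A*A)*((t-ρ)*v00) - (A*A)*((t-ρ)*f)
        - B*((t-ρ)*H1) - A*((t-ρ)*H2) := by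
      linear_combination (-(A^2)*(t-ρ))*ec - ((t-ρ)*B)*h1 - ((t-ρ)*A)*h2 + ((t-ρ)*v11)*hρ2
    have d1 : |(A*A)*((t-ρ)*v00)| ≤ (ρ*ρ)*(5*M+F) := by
      rw [abs_mul, abs_mul, abs_mul]
      apply mul_le_mul (mul_le_mul hA hA (abs_nonneg _) hρpos.le) B00 (by positivity) (by positivity)
    have d2 : |(A*A)*((t-ρ)*f)| ≤ (ρ*ρ)*F := by
      rw [abs_mul, abs_mul, abs_mul]
      apply mul_le_mul (mul_le_mul hA hA (abs_nonneg _) hρpos.le) htf (by positivity) (by positivity)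
    have d3 : |B*((t-ρ)*H1)| ≤ ρ*((11*ρ)*M) := by rw [absmm]; gcongr
    have d4 : |A*((t-ρ)*H2)| ≤ ρ*((11*ρ)*M) := by rw [absmm]; gcongr
    have hub : |ρ^2*((t-ρ)*v11)| ≤ ρ^2*(100*(M+F)) := by
      rw [I, abs_le]
      constructor
      · linarith [neg_abs_le ((A*A)*((t-ρ)*v00)), le_abs_self ((A*A)*((t-ρ)*f)),
          le_abs_self (B*((t-ρ)*H1)), le_abs_self (A*((t-ρ)*H2))]
      · linarith [le_abs_self ((A*A)*((t-ρ)*v00)), neg_abs_le ((A*A)*((t-ρ)*f)),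
          neg_abs_le (B*((t-ρ)*H1)), neg_abs_le (A*((t-ρ)*H2))]
    have heq : |ρ^2*((t-ρ)*v11)| = ρ^2*(|t - ρ| * |v11|) := by
      rw [abs_mul, abs_mul, abs_of_pos hρ2pos]
    rw [heq] at hub
    exact le_of_mul_le_mul_left hub hρ2pos
  · -- v12
    have I : ρ^2*((t-ρ)*v12) = (A*B)*((t-ρ)*v00) - (A*B)*((t-ρ)*f)
        + A*((t-ρ)*H1) - B*((t-ρ)*H2) := by
      linear_combination (-(A*B)*(t-ρ))*ec + ((t-ρ)*A)*h1 - ((t-ρ)*B)*h2 + ((t-ρ)*v12)*hρ2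
    have d1 : |(A*B)*((t-ρ)*v00)| ≤ (ρ*ρ)*(5*M+F) := by
      rw [abs_mul, abs_mul, abs_mul]
      apply mul_le_mul (mul_le_mul hA hB (abs_nonneg _) hρpos.le) B00 (by positivity) (by positivity)
    have d2 : |(A*B)*((t-ρ)*f)| ≤ (ρ*ρ)*F := by
      rw [abs_mul, abs_mul, abs_mul]
      apply mul_le_mul (mul_le_mul hA hB (abs_nonneg _) hρpos.le) htf (by positivity) (by positivity)
    have d3 : |A*((t-ρ)*H1)| ≤ ρ*((11*ρ)*M) := by rw [absmm]; gcongr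
    have d4 : |B*((t-ρ)*H2)| ≤ ρ*((11*ρ)*M) := by rw [absmm]; gcongr
    have hub : |ρ^2*((t-ρ)*v12)| ≤ ρ^2*(100*(M+F)) := by
      rw [I, abs_le]
      constructor
      · linarith [neg_abs_le ((A*B)*((t-ρ)*v00)), le_abs_self ((A*B)*((t-ρ)*f)),
          neg_abs_le (A*((t-ρ)*H1)), le_abs_self (B*((t-ρ)*H2))]
      · linarith [le_abs_self ((A*B)*((t-ρ)*v00)), neg_abs_le ((A*B)*((t-ρ)*f)),
          le_abs_self (A*((t-ρ)*H1)), neg_abs_le (B*((t-ρ)*H2))]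
    have heq : |ρ^2*((t-ρ)*v12)| = ρ^2*(|t - ρ| * |v12|) := by
      rw [abs_mul, abs_mul, abs_of_pos hρ2pos]
    rw [heq] at hub
    exact le_of_mul_le_mul_left hub hρ2pos
  · -- v22
    have I : ρ^2*((t-ρ)*v22) = (B*B)*((t-ρ)*v00) - (B*B)*((t-ρ)*f)
        + B*((t-ρ)*H1) + A*((t-ρ)*H2) := by
      linear_combination (-(B^2)*(t-ρ))*ec + ((t-ρ)*B)*h1 + ((t-ρ)*A)*h2 + ((t-ρ)*v22)*hρ2
    have d1 : |(B*B)*((t-ρ)*v00)| ≤ (ρ*ρ)*(5*M+F) := by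
      rw [abs_mul, abs_mul, abs_mul]
      apply mul_le_mul (mul_le_mul hB hB (abs_nonneg _) hρpos.le) B00 (by positivity) (by positivity)
    have d2 : |(B*B)*((t-ρ)*f)| ≤ (ρ*ρ)*F := by
      rw [abs_mul, abs_mul, abs_mul]
      apply mul_le_mul (mul_le_mul hB hB (abs_nonneg _) hρpos.le) htf (by positivity) (by positivity)
    have d3 : |B*((t-ρ)*H1)| ≤ ρ*((11*ρ)*M) := by rw [absmm]; gcongr
    have d4 : |A*((t-ρ)*H2)| ≤ ρ*((11*ρ)*M) := by rw [absmm]; gcongr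
    have hub : |ρ^2*((t-ρ)*v22)| ≤ ρ^2*(100*(M+F)) := by
      rw [I, abs_le]
      constructor
      · linarith [neg_abs_le ((B*B)*((t-ρ)*v00)), le_abs_self ((B*B)*((t-ρ)*f)),
          neg_abs_le (B*((t-ρ)*H1)), neg_abs_le (A*((t-ρ)*H2))]
      · linarith [le_abs_self ((B*B)*((t-ρ)*v00)), neg_abs_le ((B*B)*((t-ρ)*f)),
          le_abs_self (B*((t-ρ)*H1)), le_abs_self (A*((t-ρ)*H2))]
    have heq : |ρ^2*((t-ρ)*v22)| = ρ^2*(|t - ρ| * |v22|) := by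
      rw [abs_mul, abs_mul, abs_of_pos hρ2pos]
    rw [heq] at hub
    exact le_of_mul_le_mul_left hub hρ2pos

end AlgAux

section Aux2
variable {u : Spt → ℝ}
lemma gam0ev (u : Spt → ℝ) : Gam 0 u = pd 0 u := rfl
lemma gam1ev (u : Spt → ℝ) : Gam 1 u = pd 1 u := rfl
lemma gam2ev (u : Spt → ℝ) : Gam 2 u = pd 2 u := rfl
end Aux2

/-- Away from the spatial origin (r ≥ t/10, t ≥ 1), all second derivatives satisfy
⟨r−t⟩ |∂²ũ| ≲ |∂Γ^{≤1}ũ| + (r+t)|□ũ|. -/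
theorem statement9 :
    ∃ C > (0 : ℝ), ∀ u : Spt → ℝ, ContDiff ℝ 2 u →
      ∀ t : ℝ, 1 ≤ t → ∀ x : Sp, t / 10 ≤ nrm2 x →
        jb (nrm2 x - t) *
          Real.sqrt (∑ a : Fin 3, ∑ b : Fin 3, (pd a (pd b u) (st t x)) ^ 2) ≤
        C * (Real.sqrt (∑ α ∈ midx 1, ∑ i : Fin 3, (pd i (GamPow α u) (st t x)) ^ 2)
              + (nrm2 x + t) * |Box u (st t x)|) := by
  refine ⟨2000, by norm_num, ?_⟩
  intro u hu t ht x hx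
  have hsym : ∀ a b : Fin 3, pd a (pd b u) (st t x) = pd b (pd a u) (st t x) :=
    fun a b => pd_symm hu a b _
  set ρ := nrm2 x with hρdef
  have hρpos : 0 < ρ := lt_of_lt_of_le (by linarith) hx
  have ht0 : (0:ℝ) ≤ t := by linarith
  have hta : t ≤ 10 * ρ := by linarith
  have hρ2 : ρ^2 = (x 0)^2 + (x 1)^2 := Real.sq_sqrt (by positivity)
  set Q := Real.sqrt (∑ α ∈ midx 1, ∑ i : Fin 3, (pd i (GamPow α u) (st t x)) ^ 2) with hQdef
  have hQ0 : 0 ≤ Q := Real.sqrt_nonneg _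
  have hB0 : 0 ≤ |Box u (st t x)| := abs_nonneg _
  -- pointwise bounds by Q
  have bnd : ∀ (α : Fin 5 → ℕ), α ∈ midx 1 → ∀ i : Fin 3,
      |pd i (GamPow α u) (st t x)| ≤ Q := fun α hα i => le_Q u (st t x) α hα i
  have bG4 : ∀ i : Fin 3, |pd i (Gam 4 u) (st t x)| ≤ Q := by
    intro i; have := bnd (eidx 4) (mem_eidx 4) i; rwa [gp_e4] at this
  have bG3 : ∀ i : Fin 3, |pd i (Gam 3 u) (st t x)| ≤ Q := by
    intro i; have := bnd (eidx 3) (mem_eidx 3) i; rwa [gp_e3] at this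
  have bU : ∀ i : Fin 3, |pd i u (st t x)| ≤ Q := by
    intro i; have := bnd (fun _ => 0) mem_zero i; rwa [gp_zero] at this
  have bP0 : ∀ i : Fin 3, |pd i (pd 0 u) (st t x)| ≤ Q := by
    intro i; have := bnd (eidx 0) (mem_eidx 0) i; rwa [gp_e0, gam0ev] at this
  have bP1 : ∀ i : Fin 3, |pd i (pd 1 u) (st t x)| ≤ Q := by
    intro i; have := bnd (eidx 1) (mem_eidx 1) i; rwa [gp_e1, gam1ev] at this
  have bP2 : ∀ i : Fin 3, |pd i (pd 2 u) (st t x)| ≤ Q := by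
    intro i; have := bnd (eidx 2) (mem_eidx 2) i; rwa [gp_e2, gam2ev] at this
  -- the equations
  have E0 : t * pd 0 (pd 0 u) (st t x) + x 0 * pd 0 (pd 1 u) (st t x)
      + x 1 * pd 0 (pd 2 u) (st t x) = pd 0 (Gam 4 u) (st t x) - pd 0 u (st t x) := by
    have h := pd_gam4 hu 0 (st t x)
    rw [st0, st1, st2] at h; linarith
  have E1 : t * pd 0 (pd 1 u) (st t x) + x 0 * pd 1 (pd 1 u) (st t x)
      + x 1 * pd 1 (pd 2 u) (st t x) = pd 1 (Gam 4 u) (st t x) - pd 1 u (st t x) := by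
    have h := pd_gam4 hu 1 (st t x)
    rw [st0, st1, st2, hsym 1 0] at h; linarith
  have E2 : t * pd 0 (pd 2 u) (st t x) + x 0 * pd 1 (pd 2 u) (st t x)
      + x 1 * pd 2 (pd 2 u) (st t x) = pd 2 (Gam 4 u) (st t x) - pd 2 u (st t x) := by
    have h := pd_gam4 hu 2 (st t x)
    rw [st0, st1, st2, hsym 2 0, hsym 2 1] at h; linarith
  have F0 : x 0 * pd 0 (pd 2 u) (st t x) - x 1 * pd 0 (pd 1 u) (st t x)
      = pd 0 (Gam 3 u) (st t x) := by
    have h := pd_gam3 hu 0 (st t x)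
    rw [st1, st2, if_neg (by decide), if_neg (by decide)] at h; linarith
  have F1 : x 0 * pd 1 (pd 2 u) (st t x) - x 1 * pd 1 (pd 1 u) (st t x)
      = pd 1 (Gam 3 u) (st t x) - pd 2 u (st t x) := by
    have h := pd_gam3 hu 1 (st t x)
    rw [st1, st2, if_pos rfl, if_neg (by decide)] at h; linarith
  have F2 : x 0 * pd 2 (pd 2 u) (st t x) - x 1 * pd 1 (pd 2 u) (st t x)
      = pd 2 (Gam 3 u) (st t x) + pd 1 u (st t x) := by
    have h := pd_gam3 hu 2 (st t x)
    rw [st1, st2, if_neg (by decide), if_pos rfl, hsym 2 1] at h; linarith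
  have ecB : pd 0 (pd 0 u) (st t x) - pd 1 (pd 1 u) (st t x) - pd 2 (pd 2 u) (st t x)
      = Box u (st t x) := rfl
  -- M-bounds
  have hG0 : |pd 0 (Gam 4 u) (st t x) - pd 0 u (st t x)| ≤ 2*Q := by
    have := abs_sub (pd 0 (Gam 4 u) (st t x)) (pd 0 u (st t x))
    have a1 := bG4 0; have a2 := bU 0; linarith
  have hG1 : |pd 1 (Gam 4 u) (st t x) - pd 1 u (st t x)| ≤ 2*Q := by
    have := abs_sub (pd 1 (Gam 4 u) (st t x)) (pd 1 u (st t x))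
    have a1 := bG4 1; have a2 := bU 1; linarith
  have hG2 : |pd 2 (Gam 4 u) (st t x) - pd 2 u (st t x)| ≤ 2*Q := by
    have := abs_sub (pd 2 (Gam 4 u) (st t x)) (pd 2 u (st t x))
    have a1 := bG4 2; have a2 := bU 2; linarith
  have hH0 : |pd 0 (Gam 3 u) (st t x)| ≤ 2*Q := by
    have a1 := bG3 0; linarith
  have hH1 : |pd 1 (Gam 3 u) (st t x) - pd 2 u (st t x)| ≤ 2*Q := by
    have := abs_sub (pd 1 (Gam 3 u) (st t x)) (pd 2 u (st t x))
    have a1 := bG3 1; have a2 := bU 2; linarith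
  have hH2 : |pd 2 (Gam 3 u) (st t x) + pd 1 u (st t x)| ≤ 2*Q := by
    have := abs_add_le (pd 2 (Gam 3 u) (st t x)) (pd 1 u (st t x))
    have a1 := bG3 2; have a2 := bU 1; linarith
  obtain ⟨K00, K01, K02, K11, K12, K22⟩ :=
    keyAlg t (x 0) (x 1) ρ
      (pd 0 (pd 0 u) (st t x)) (pd 0 (pd 1 u) (st t x)) (pd 0 (pd 2 u) (st t x))
      (pd 1 (pd 1 u) (st t x)) (pd 1 (pd 2 u) (st t x)) (pd 2 (pd 2 u) (st t x))
      (Box u (st t x))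
      (pd 0 (Gam 4 u) (st t x) - pd 0 u (st t x))
      (pd 1 (Gam 4 u) (st t x) - pd 1 u (st t x))
      (pd 2 (Gam 4 u) (st t x) - pd 2 u (st t x))
      (pd 0 (Gam 3 u) (st t x))
      (pd 1 (Gam 3 u) (st t x) - pd 2 u (st t x))
      (pd 2 (Gam 3 u) (st t x) + pd 1 u (st t x))
      (2*Q) ((t+ρ)*|Box u (st t x)|)
      hρ2 hρpos ht0 hta E0 E1 E2 F0 F1 F2 ecB hG0 hG1 hG2 hH0 hH1 hH2
      (le_refl _) (by positivity) (by positivity)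
  -- assemble
  have hsq : Real.sqrt (∑ a : Fin 3, ∑ b : Fin 3, (pd a (pd b u) (st t x)) ^ 2)
      ≤ ∑ a : Fin 3, ∑ b : Fin 3, |pd a (pd b u) (st t x)| := by
    have := sqrt_sum_le (fun a b => pd a (pd b u) (st t x))
    simpa using this
  have hjb : jb (ρ - t) ≤ 1 + |t - ρ| := by
    have := jb_le (ρ - t)
    rw [abs_sub_comm] at this; exact this
  have hw0 : (0:ℝ) ≤ 1 + |t - ρ| := by positivity
  calc jb (ρ - t) * Real.sqrt (∑ a : Fin 3, ∑ b : Fin 3, (pd a (pd b u) (st t x)) ^ 2)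
      ≤ (1 + |t - ρ|) * Real.sqrt (∑ a : Fin 3, ∑ b : Fin 3, (pd a (pd b u) (st t x)) ^ 2) :=
        mul_le_mul_of_nonneg_right hjb (Real.sqrt_nonneg _)
    _ ≤ (1 + |t - ρ|) * ∑ a : Fin 3, ∑ b : Fin 3, |pd a (pd b u) (st t x)| :=
        mul_le_mul_of_nonneg_left hsq hw0
    _ ≤ 2000 * (Q + (ρ + t) * |Box u (st t x)|) := by
        have hexp : (∑ a : Fin 3, ∑ b : Fin 3, |pd a (pd b u) (st t x)|)
            = |pd 0 (pd 0 u) (st t x)| + |pd 0 (pd 1 u) (st t x)| + |pd 0 (pd 2 u) (st t x)|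
            + |pd 1 (pd 0 u) (st t x)| + |pd 1 (pd 1 u) (st t x)| + |pd 1 (pd 2 u) (st t x)|
            + |pd 2 (pd 0 u) (st t x)| + |pd 2 (pd 1 u) (st t x)| + |pd 2 (pd 2 u) (st t x)| := by
          simp [Fin.sum_univ_three]; ring
        rw [hexp, hsym 1 0, hsym 2 0, hsym 2 1]
        have p00 := bP0 0; have p01 := bP1 0; have p02 := bP2 0
        have p11 := bP1 1; have p12 := bP2 1; have p22 := bP2 2
        have w00 := abs_nonneg (pd 0 (pd 0 u) (st t x))
        nlinarith [K00, K01, K02, K11, K12, K22, abs_nonneg (t-ρ), hQ0, hB0,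
          mul_nonneg ht0 hB0, mul_nonneg hρpos.le hB0]
end
end
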